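/- arXiv:1511.05140 — 3 statements merged into one kernel-verified Lean document; each statement's English description precedes it below -/
import Mathlib

section
/- There exist a constant C < ∞ and a sequence δ_j → 0 (both depending only on μ) such that q(j, y) ≤ C·y·j^{−1/2} + δ_j for all real y ≥ 1 and all integers j ≥ 1. -/
open MeasureTheory ProbabilityTheory Filter

noncomputable section

/-- The parameters of the spatial queue model: a "comfort zone" `[cm, cp]` with `0 < cm < cp`,
and a probability measure `μ` on `[cm, cp]` with mean `1` and positive variance. -/
structure QueueParams where
  cm : ℝ
  cp : ℝ
  cm_pos : 0 < cm
  cm_lt_cp : cm < cp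
  μ : Measure ℝ
  μ_prob : IsProbabilityMeasure μ
  μ_supp : μ (Set.Icc cm cp) = 1
  μ_mean : ∫ x, x ∂μ = 1
  μ_var_pos : 0 < ∫ x, (x - 1) ^ 2 ∂μ

/-- The standard deviation `σ` of `μ`. -/
def QueueParams.sigma (Q : QueueParams) : ℝ := Real.sqrt (∫ x, (x - 1) ^ 2 ∂Q.μ)

/-- Membership in the state space `𝕏`: configurations `0 = x_0 < x_1 < ⋯` with successive
spacings in `[cm, cp]`. -/
def QueueParams.IsConfig (Q : QueueParams) (x : ℕ → ℝ) : Prop :=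
  x 0 = 0 ∧ ∀ i : ℕ, x (i + 1) - x i ∈ Set.Icc Q.cm Q.cp

/-- `q(j,y)`: the probability that the symmetrized random walk
`S^{sym}_k = Σ_{i=1}^k (ξ'_i - ξ''_i)` (with `ξ', ξ''` independent i.i.d.(μ)) satisfies
`max_{1 ≤ k ≤ j} S^{sym}_k ≤ y`. -/
def QueueParams.symWalkProb (Q : QueueParams) (j : ℕ) (y : ℝ) : ℝ :=
  haveI := Q.μ_prob
  ((Measure.pi fun _ : Fin j => Q.μ.prod Q.μ)
    {v : Fin j → ℝ × ℝ | ∀ k ∈ Finset.Icc 1 j,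
      (∑ i ∈ Finset.univ.filter (fun i : Fin j => (i : ℕ) < k), ((v i).1 - (v i).2)) ≤ y}).toReal

/-- `q_{j,y}(x_1, …, x_j)`: the probability that
`max_{1 ≤ k ≤ j} Σ_{i=1}^k (ξ'_i - x_i) ≤ y`, where `(ξ'_i)` is i.i.d.(μ). -/
def QueueParams.condWalkProb (Q : QueueParams) (j : ℕ) (y : ℝ) (x : ℕ → ℝ) : ℝ :=
  haveI := Q.μ_prob
  ((Measure.pi fun _ : Fin j => Q.μ)
    {v : Fin j → ℝ | ∀ k ∈ Finset.Icc 1 j,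
      (∑ i ∈ Finset.univ.filter (fun i : Fin j => (i : ℕ) < k), v i)
        - (∑ i ∈ Finset.Icc 1 k, x i) ≤ y}).toReal

/-- A sequence `(x_1, …, x_j)` is `(j,y)`-good if `q_{j,y}(x_1,…,x_j) ≤ 2 q(j,y)`. -/
def QueueParams.IsGood (Q : QueueParams) (j : ℕ) (y : ℝ) (x : ℕ → ℝ) : Prop :=
  Q.condWalkProb j y x ≤ 2 * Q.symWalkProb j y

/-- The spatial queue process with parameters `Q`, driven by an i.i.d.(μ) array
`(ξ i t)_{i ≥ 1, t ≥ 1}`, started from an arbitrary (deterministic) initial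
configuration `x0 ∈ 𝕏`.  `X i t` is the position of the rank-`i` customer at time `t`,
defined by the recursion (1)–(3) of the paper: at step `t`, customer `i ≥ 1` moves to
`ξ_1(t) + ⋯ + ξ_i(t)` if `Σ_{m ≤ k} ξ_m(t) < X_{k+1}(t-1) - cp` for all `1 ≤ k ≤ i`
(i.e. `i < W(t)`), and otherwise stays at `X_{i+1}(t-1)`. -/
structure QueueProcess (Q : QueueParams) (Ω : Type) [MeasurableSpace Ω] where
  P : Measure Ω
  P_prob : IsProbabilityMeasure P
  ξ : ℕ → ℕ → Ω → ℝ
  ξ_meas : ∀ i t, 1 ≤ i → 1 ≤ t → Measurable (ξ i t)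
  ξ_range : ∀ i t ω, 1 ≤ i → 1 ≤ t → ξ i t ω ∈ Set.Icc Q.cm Q.cp
  ξ_law : ∀ i t, 1 ≤ i → 1 ≤ t → P.map (ξ i t) = Q.μ
  ξ_indep : iIndepFun
    (fun p : ℕ × ℕ => ξ (p.1 + 1) (p.2 + 1)) P
  X : ℕ → ℕ → Ω → ℝ
  X_meas : ∀ i t, Measurable (X i t)
  x0 : ℕ → ℝ
  x0_config : Q.IsConfig x0
  X_init : ∀ i ω, X i 0 ω = x0 i
  X_zero : ∀ t ω, X 0 t ω = 0
  X_move : ∀ t ω i, 1 ≤ t → 1 ≤ i →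
    (∀ k ∈ Finset.Icc 1 i, (∑ m ∈ Finset.Icc 1 k, ξ m t ω) < X (k + 1) (t - 1) ω - Q.cp) →
    X i t ω = ∑ m ∈ Finset.Icc 1 i, ξ m t ω
  X_stay : ∀ t ω i, 1 ≤ t → 1 ≤ i →
    ¬ (∀ k ∈ Finset.Icc 1 i, (∑ m ∈ Finset.Icc 1 k, ξ m t ω) < X (k + 1) (t - 1) ω - Q.cp) →
    X i t ω = X (i + 1) (t - 1) ω

namespace QueueProcess

variable {Q : QueueParams} {Ω : Type} [MeasurableSpace Ω]

/-- The wave length `W(t)` at step `t`: the least `i ≥ 1` with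
`ξ_1(t) + ⋯ + ξ_i(t) ≥ X_{i+1}(t-1) - cp`, or `∞` if there is no such `i`. -/
def W (qp : QueueProcess Q Ω) (t : ℕ) (ω : Ω) : ℕ∞ :=
  ⨅ n ∈ {n : ℕ | 1 ≤ n ∧
    qp.X (n + 1) (t - 1) ω - Q.cp ≤ ∑ m ∈ Finset.Icc 1 n, qp.ξ m t ω}, (n : ℕ∞)

/-- `ρ⁺(j) = limsup_{τ→∞} τ⁻¹ Σ_{t=1}^τ P(W(t) > j)`. -/
def rhoPlus (qp : QueueProcess Q Ω) (j : ℕ) : ℝ :=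
  Filter.limsup (fun τ : ℕ =>
    (τ : ℝ)⁻¹ * ∑ t ∈ Finset.Icc 1 τ, (qp.P {ω | (j : ℕ∞) < qp.W t ω}).toReal) Filter.atTop

/-- `ρ₋(j) = liminf_{τ→∞} τ⁻¹ Σ_{t=1}^τ P(W(t) > j)`. -/
def rhoMinus (qp : QueueProcess Q Ω) (j : ℕ) : ℝ :=
  Filter.liminf (fun τ : ℕ =>
    (τ : ℝ)⁻¹ * ∑ t ∈ Finset.Icc 1 τ, (qp.P {ω | (j : ℕ∞) < qp.W t ω}).toReal) Filter.atTop

/-- `X*_s(t) = X_{s-t}(t)`: the position of the individual of initial rank `s` at time `t ≤ s`. -/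
def Xstar (qp : QueueProcess Q Ω) (s t : ℕ) (ω : Ω) : ℝ := qp.X (s - t) t ω

/-- `L_s(t0)`: the time since the last move of individual `s`, i.e. the largest `ℓ ≤ t0` with
`X*_s(t0) = X*_s(t0 - ℓ)` (equal to `t0` if individual `s` has never moved). -/
def Lmove (qp : QueueProcess Q Ω) (s t0 : ℕ) (ω : Ω) : ℕ :=
  sSup {ℓ : ℕ | ℓ ≤ t0 ∧ qp.Xstar s t0 ω = qp.Xstar s (t0 - ℓ) ω}

/-- The event `A_{s+1}(t0) = {L_s(t0) = L_{s+1}(t0) < t0}` that individuals `s` and `s+1`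
are in the same block at time `t0`. -/
def blockEvent (qp : QueueProcess Q Ω) (s t0 : ℕ) : Set Ω :=
  {ω | qp.Lmove s t0 ω = qp.Lmove (s + 1) t0 ω ∧ qp.Lmove s t0 ω < t0}

/-- `M(t0) = min{s ≥ t0 : X*_s(t0) = X*_s(0)}` (`∞` if there is no such `s`). -/
def Mfirst (qp : QueueProcess Q Ω) (t0 : ℕ) (ω : Ω) : ℕ∞ :=
  ⨅ s ∈ {s : ℕ | t0 ≤ s ∧ qp.Xstar s t0 ω = qp.Xstar s 0 ω}, (s : ℕ∞)

/-- The natural filtration `ℱ(t) = σ(𝐗(u), 0 ≤ u ≤ t)` of the process. -/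
def F (qp : QueueProcess Q Ω) (t : ℕ) : MeasurableSpace Ω :=
  ⨆ u ∈ Set.Iic t, MeasurableSpace.comap (fun ω (i : ℕ) => qp.X i u ω)
    (inferInstance : MeasurableSpace (ℕ → ℝ))

/-- The σ-field generated by `𝐗_{[s]}(t) = (X_i(t), 0 ≤ i ≤ s - t)`, the positions of
individual `s` and the customers ahead of it at time `t`. -/
def sigmaXupto (qp : QueueProcess Q Ω) (s t : ℕ) : MeasurableSpace Ω :=
  MeasurableSpace.comap (fun ω (i : ℕ) => if i ≤ s - t then qp.X i t ω else 0)
    (inferInstance : MeasurableSpace (ℕ → ℝ))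

/-- The σ-field `𝒢_s(t0) = σ(𝐗_{[s]}(t), 0 ≤ t ≤ t0; A_{s+1}(t0))`. -/
def Gfield (qp : QueueProcess Q Ω) (s t0 : ℕ) : MeasurableSpace Ω :=
  (⨆ t ∈ Set.Iic t0, qp.sigmaXupto s t)
    ⊔ MeasurableSpace.generateFrom {qp.blockEvent s t0}

/-- The event `A_t = {W(t) > s - t}` that individual `s` moves at time `t`. -/
def waveA (qp : QueueProcess Q Ω) (s t : ℕ) : Set Ω :=
  {ω | ((s - t : ℕ) : ℕ∞) < qp.W t ω}

/-- The event `C_t = {W(t) > s - t + j}` of a long wave at time `t`. -/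
def waveC (qp : QueueProcess Q Ω) (s j t : ℕ) : Set Ω :=
  {ω | ((s - t + j : ℕ) : ℕ∞) < qp.W t ω}

/-- The event `B_t` that the long wave at time `t` is good. -/
def waveB (qp : QueueProcess Q Ω) (s j : ℕ) (y : ℝ) (t : ℕ) : Set Ω :=
  qp.waveC s j t ∩ {ω | Q.IsGood j y (fun i => qp.ξ (s - t + i) t ω)}

/-- The successive times `T_u` of good long waves (`T_0 = 0` by convention). -/
def Tgood (qp : QueueProcess Q Ω) (s j : ℕ) (y : ℝ) : ℕ → Ω → ℕ∞
  | 0 => fun _ => 0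
  | u + 1 => fun ω =>
      ⨅ t ∈ {t : ℕ | qp.Tgood s j y u ω < (t : ℕ∞) ∧ ω ∈ qp.waveB s j y t}, (t : ℕ∞)

/-- `N_A(n) = Σ_{t=1}^n 1_{A_t}`, the number of waves up to time `n` that move individual `s`. -/
def NA (qp : QueueProcess Q Ω) (s n : ℕ) (ω : Ω) : ℝ :=
  ∑ t ∈ Finset.Icc 1 n, Set.indicator (qp.waveA s t) (fun _ => (1 : ℝ)) ω

/-- `G(t,x) = t + F_t(x)` where `F_t(x) = max{k : X_k(t) ≤ x} - x` is the centered counting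
function of the time-`t` configuration. -/
def G (qp : QueueProcess Q Ω) (t : ℕ) (x : ℝ) (ω : Ω) : ℝ :=
  (t : ℝ) + ((sSup {k : ℕ | qp.X k t ω ≤ x} : ℕ) : ℝ) - x

end QueueProcess

/-!
Stop the symmetrized walk `S` when it first leaves `[-√j, y]`. The stopped walk `V` is a sum
of martingale differences bounded by `b = c⁺ - c₋`, so `E V = 0`, `V ∈ [-√j - b, y + b]`, and
by orthogonality of the increments
`2σ² · j · P(S stays in [-√j, y]) ≤ E V² ≤ (y + b)(√j + b)`.
Markov's inequality for `y + b - V ≥ 0` gives `P(V < -√j) ≤ (y + b)/√j`. If `max S ≤ y`, one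
of these two events occurs, so `q(j, y) = O(y/√j)` and one can take `δ_j = 0`.
-/

theorem integral_pi_mul_comp_eval {α : Type*} [MeasurableSpace α] (ν : Measure α)
    [IsProbabilityMeasure ν] {n : ℕ} (i : Fin n) {F : (Fin n → α) → ℝ}
    (hF : ∀ v w, (∀ j, j ≠ i → v j = w j) → F v = F w) (g : α → ℝ) :
    ∫ v, F v * g (v i) ∂Measure.pi (fun _ => ν)
      = (∫ v, F v ∂Measure.pi fun _ => ν) * ∫ x, g x ∂ν := by
  obtain ⟨m, rfl⟩ : ∃ m, n = m + 1 := Nat.exists_eq_succ_of_ne_zero i.pos.ne'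
  obtain ⟨x₀⟩ := nonempty_of_isProbabilityMeasure ν
  have hsplit : ∀ H : (Fin (m + 1) → α) → ℝ, ∫ v, H v ∂Measure.pi (fun _ => ν)
      = ∫ z, H (i.insertNth z.1 z.2) ∂ν.prod (Measure.pi fun _ => ν) := fun H =>
    ((measurePreserving_piFinSuccAbove (fun _ => ν) i).symm.integral_comp' H).symm
  have hG : ∀ x r, F (i.insertNth x r) = F (i.insertNth x₀ r) := fun x r =>
    hF _ _ fun j hj => by
      obtain ⟨k, rfl⟩ := Fin.exists_succAbove_eq hj
      simp only [Fin.insertNth_apply_succAbove]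
  calc ∫ v, F v * g (v i) ∂Measure.pi (fun _ => ν)
      = ∫ z, g z.1 * F (i.insertNth x₀ z.2) ∂ν.prod (Measure.pi fun _ => ν) := by
        rw [hsplit]
        simp only [Fin.insertNth_apply_same, hG, mul_comm]
    _ = (∫ x, g x ∂ν) * ∫ r, F (i.insertNth x₀ r) ∂Measure.pi fun _ => ν :=
        integral_prod_mul (L := ℝ) g fun r => F (i.insertNth x₀ r)
    _ = (∫ v, F v ∂Measure.pi fun _ => ν) * ∫ x, g x ∂ν := by
        rw [hsplit F, mul_comm]
        simp only [hG]
        rw [integral_fun_snd (fun r => F (i.insertNth x₀ r)), probReal_univ, one_smul]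

namespace RandomWalk

variable {α : Type*} {n : ℕ}

def partialSum (f : α → ℝ) (k : ℕ) (v : Fin n → α) : ℝ :=
  ∑ i ∈ Finset.univ.filter (fun i : Fin n => (i : ℕ) < k), f (v i)

def StaysIn (f : α → ℝ) (a c : ℝ) (k : ℕ) (v : Fin n → α) : Prop :=
  ∀ l ≤ k, partialSum f l v ∈ Set.Icc a c

def increment (f : α → ℝ) (a c : ℝ) (i : Fin n) (v : Fin n → α) : ℝ :=
  {w | StaysIn f a c i w}.indicator 1 v * f (v i)

/-- The walk stopped when it first leaves `[a, c]`: step `i` is taken iff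
`S_0, …, S_i ∈ [a, c]`. -/
def stopped (f : α → ℝ) (a c : ℝ) (v : Fin n → α) : ℝ :=
  ∑ i : Fin n, increment f a c i v

variable {f : α → ℝ} {a c : ℝ} {v : Fin n → α}

lemma partialSum_zero (v : Fin n → α) : partialSum f 0 v = 0 := by
  simp [partialSum]

lemma partialSum_succ {k : ℕ} (hk : k < n) (v : Fin n → α) :
    partialSum f (k + 1) v = partialSum f k v + f (v ⟨k, hk⟩) := by
  have h : Finset.univ.filter (fun i : Fin n => (i : ℕ) < k + 1)
      = insert ⟨k, hk⟩ (Finset.univ.filter fun i : Fin n => (i : ℕ) < k) := by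
    ext i
    simp only [Finset.mem_filter, Finset.mem_univ, true_and, Finset.mem_insert, Fin.ext_iff]
    omega
  rw [partialSum, h, Finset.sum_insert (by simp), add_comm]
  rfl

lemma partialSum_congr {k : ℕ} {w : Fin n → α}
    (h : ∀ j : Fin n, (j : ℕ) < k → v j = w j) :
    partialSum f k v = partialSum f k w :=
  Finset.sum_congr rfl fun j hj => by rw [h j (Finset.mem_filter.1 hj).2]

lemma staysIn_congr {k : ℕ} {w : Fin n → α} (h : ∀ j : Fin n, (j : ℕ) < k → v j = w j) :
    StaysIn f a c k v ↔ StaysIn f a c k w :=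
  forall₂_congr fun l hl => by
    rw [partialSum_congr fun j hj => h j (hj.trans_le hl)]

lemma indicator_staysIn_congr {k : ℕ} {w : Fin n → α}
    (h : ∀ j : Fin n, (j : ℕ) < k → v j = w j) :
    {u | StaysIn f a c k u}.indicator (1 : (Fin n → α) → ℝ) v
      = {u | StaysIn f a c k u}.indicator 1 w := by
  classical
  simp only [Set.indicator_apply, Set.mem_ofPred_eq, staysIn_congr h, Pi.one_apply]

lemma increment_congr {i : Fin n} {w : Fin n → α} (h : ∀ j : Fin n, j ≤ i → v j = w j) :
    increment f a c i v = increment f a c i w := by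
  rw [increment, increment, indicator_staysIn_congr fun j hj => h j (Fin.le_of_lt hj),
    h i le_rfl]

lemma stopped_eq_partialSum {m : ℕ} (h : ∀ i : Fin n, StaysIn f a c i v ↔ (i : ℕ) < m) :
    stopped f a c v = partialSum f m v := by
  rw [stopped, partialSum, Finset.sum_filter]
  refine Finset.sum_congr rfl fun i _ => ?_
  by_cases hi : StaysIn f a c i v <;> simp [increment, hi, ← h i]

lemma stopped_of_staysIn (h : StaysIn f a c n v) : stopped f a c v = partialSum f n v :=
  stopped_eq_partialSum fun i => iff_of_true (fun l hl => h l (hl.trans i.is_lt.le)) i.is_lt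

lemma exists_exit_of_not_staysIn (ha : a ≤ 0) (hc : 0 ≤ c) (h : ¬StaysIn f a c n v) :
    ∃ m, m < n ∧ partialSum f m v ∈ Set.Icc a c ∧
      stopped f a c v = partialSum f (m + 1) v ∧ stopped f a c v ∉ Set.Icc a c := by
  have hex : ∃ l, partialSum f l v ∉ Set.Icc a c := by
    simp only [StaysIn, not_forall] at h
    obtain ⟨l, -, hl⟩ := h
    exact ⟨l, hl⟩
  have hmin : ∀ l < Nat.find hex, partialSum f l v ∈ Set.Icc a c := fun l hl =>
    not_not.1 (Nat.find_min hex hl)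
  obtain ⟨m, hm_eq⟩ : ∃ m, Nat.find hex = m + 1 := by
    refine Nat.exists_eq_succ_of_ne_zero fun h0 => ?_
    have := Nat.find_spec hex
    rw [h0, partialSum_zero] at this
    exact this ⟨ha, hc⟩
  have hmn : m < n := by
    by_contra! hnm
    exact h fun l hl => hmin l (by omega)
  have hstop : stopped f a c v = partialSum f (m + 1) v :=
    stopped_eq_partialSum fun i =>
      ⟨fun hi => by
        by_contra! hmi
        exact Nat.find_spec hex (hm_eq ▸ hi _ hmi),
       fun hi l hl => hmin l (by omega)⟩
  refine ⟨m, hmn, hmin m (by omega), hstop, ?_⟩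
  rw [hstop, ← hm_eq]
  exact Nat.find_spec hex

lemma stopped_mem_Icc {b : ℝ} (ha : a ≤ 0) (hc : 0 ≤ c) (hb : 0 ≤ b)
    (hv : ∀ i, |f (v i)| ≤ b) : stopped f a c v ∈ Set.Icc (a - b) (c + b) := by
  by_cases h : StaysIn f a c n v
  · obtain ⟨h₁, h₂⟩ := h n le_rfl
    rw [stopped_of_staysIn h]
    constructor <;> linarith
  · obtain ⟨m, hm, ⟨h₁, h₂⟩, hstop, -⟩ := exists_exit_of_not_staysIn ha hc h
    have hstep := abs_le.1 (hv ⟨m, hm⟩)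
    rw [hstop, partialSum_succ hm]
    constructor <;> linarith

lemma setOf_partialSum_le_subset (ha : a ≤ 0) (hc : 0 ≤ c) :
    {v : Fin n → α | ∀ k ∈ Finset.Icc 1 n, partialSum f k v ≤ c}
      ⊆ {v | StaysIn f a c n v} ∪ {v | stopped f a c v < a} := by
  intro v hv
  by_cases h : StaysIn f a c n v
  · exact Or.inl h
  · obtain ⟨m, hm, -, hstop, hout⟩ := exists_exit_of_not_staysIn ha hc h
    have hle : stopped f a c v ≤ c := hstop ▸ hv (m + 1) (Finset.mem_Icc.2 ⟨by omega, hm⟩)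
    exact Or.inr (lt_of_not_ge fun hge => hout ⟨hge, hle⟩)

variable [MeasurableSpace α]

lemma measurable_partialSum (hf : Measurable f) (k : ℕ) :
    Measurable (partialSum f k : (Fin n → α) → ℝ) :=
  Finset.measurable_sum _ fun i _ => hf.comp (measurable_pi_apply i)

lemma measurableSet_staysIn (hf : Measurable f) (a c : ℝ) (k : ℕ) :
    MeasurableSet {v : Fin n → α | StaysIn f a c k v} := by
  simp only [StaysIn, Set.ofPred_forall]
  exact MeasurableSet.iInter fun l => MeasurableSet.iInter fun _ =>
    measurable_partialSum hf l measurableSet_Icc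

lemma measurable_increment (hf : Measurable f) (a c : ℝ) (i : Fin n) :
    Measurable (increment f a c i) :=
  (measurable_one.indicator (measurableSet_staysIn hf a c i)).mul
    (hf.comp (measurable_pi_apply i))

lemma measurable_stopped (hf : Measurable f) (a c : ℝ) :
    Measurable (stopped f a c : (Fin n → α) → ℝ) :=
  Finset.measurable_sum _ fun i _ => measurable_increment hf a c i

variable (ν : Measure α) [IsProbabilityMeasure ν] {b : ℝ}

local notation "𝐏" => Measure.pi fun _ : Fin n => ν

lemma ae_forall_abs_le (hfb : ∀ᵐ x ∂ν, |f x| ≤ b) :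
    ∀ᵐ v ∂𝐏, ∀ i, |f (v i)| ≤ b :=
  ae_all_iff.2 fun i => (measurePreserving_eval (fun _ => ν) i).quasiMeasurePreserving.ae hfb

lemma integrable_increment (hf : Measurable f) (hfb : ∀ᵐ x ∂ν, |f x| ≤ b) (i : Fin n) :
    Integrable (increment f a c i) 𝐏 := by
  refine Integrable.of_bound (measurable_increment hf a c i).aestronglyMeasurable b ?_
  filter_upwards [ae_forall_abs_le ν hfb] with v hv
  rw [Real.norm_eq_abs, increment, abs_mul]
  by_cases hi : v ∈ {w | StaysIn f a c i w} <;> simp [hi, hv i, (abs_nonneg _).trans (hv i)]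

lemma integral_increment (hmean : ∫ x, f x ∂ν = 0) (i : Fin n) :
    ∫ v, increment f a c i v ∂𝐏 = 0 := by
  simp only [increment]
  rw [integral_pi_mul_comp_eval ν i (fun v w h => indicator_staysIn_congr fun j hj =>
    h j (Fin.ne_of_lt hj)), hmean, mul_zero]

lemma integral_increment_mul_self (hf : Measurable f) (i : Fin n) :
    ∫ v, increment f a c i v * increment f a c i v ∂𝐏
      = (∫ x, f x ^ 2 ∂ν) * 𝐏.real {v | StaysIn f a c i v} := by
  have hsq : ∀ v, increment f a c i v * increment f a c i v
      = {u | StaysIn f a c i u}.indicator 1 v * f (v i) ^ 2 := fun v => by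
    by_cases hi : v ∈ {u | StaysIn f a c i u} <;> simp [increment, hi, sq]
  simp only [hsq]
  rw [integral_pi_mul_comp_eval ν i
      (fun v w h => indicator_staysIn_congr fun j hj => h j (Fin.ne_of_lt hj)) fun x => f x ^ 2,
    integral_indicator_one (measurableSet_staysIn hf a c i), mul_comm]

lemma integral_increment_mul_of_lt (hmean : ∫ x, f x ∂ν = 0) {i j : Fin n} (hji : j < i) :
    ∫ v, increment f a c i v * increment f a c j v ∂𝐏 = 0 := by
  have hdep : ∀ v w : Fin n → α, (∀ l, l ≠ i → v l = w l) →
      {u | StaysIn f a c i u}.indicator 1 v * increment f a c j v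
        = {u | StaysIn f a c i u}.indicator 1 w * increment f a c j w := fun v w h => by
    rw [indicator_staysIn_congr fun l hl => h l (Fin.ne_of_lt hl),
      increment_congr fun l hl => h l (Fin.ne_of_lt (hl.trans_lt hji))]
  calc ∫ v, increment f a c i v * increment f a c j v ∂𝐏
      = ∫ v, {u | StaysIn f a c i u}.indicator 1 v * increment f a c j v * f (v i)
          ∂𝐏 := by
        congr 1
        funext v
        simp only [increment]
        ring
    _ = 0 := by rw [integral_pi_mul_comp_eval ν i hdep f, hmean, mul_zero]

lemma integral_stopped (hf : Measurable f) (hfb : ∀ᵐ x ∂ν, |f x| ≤ b)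
    (hmean : ∫ x, f x ∂ν = 0) :
    ∫ v, stopped f a c v ∂𝐏 = 0 := by
  simp only [stopped]
  rw [integral_finsetSum _ fun i _ => integrable_increment ν hf hfb i]
  exact Finset.sum_eq_zero fun i _ => integral_increment ν hmean i

lemma integral_stopped_sq (hf : Measurable f) (hfb : ∀ᵐ x ∂ν, |f x| ≤ b)
    (hmean : ∫ x, f x ∂ν = 0) :
    ∫ v, stopped f a c v ^ 2 ∂𝐏
      = (∫ x, f x ^ 2 ∂ν) * ∑ i : Fin n,
          𝐏.real {v | StaysIn f a c i v} := by
  have hint : ∀ i j : Fin n, Integrable (fun v => increment f a c i v * increment f a c j v)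
      𝐏 := fun i j => by
    refine (integrable_increment ν hf hfb j).bdd_mul
      (measurable_increment hf a c i).aestronglyMeasurable (c := b) ?_
    filter_upwards [ae_forall_abs_le ν hfb] with v hv
    rw [Real.norm_eq_abs, increment, abs_mul]
    by_cases hi : v ∈ {w | StaysIn f a c i w} <;> simp [hi, hv i, (abs_nonneg _).trans (hv i)]
  have hexp : ∀ v, stopped f a c v ^ 2
      = ∑ i : Fin n, ∑ j : Fin n, increment f a c i v * increment f a c j v := fun v => by
    rw [stopped, sq, Finset.sum_mul_sum]
  simp only [hexp]
  rw [integral_finsetSum _ fun i _ => integrable_finsetSum _ fun j _ => hint i j, Finset.mul_sum]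
  refine Finset.sum_congr rfl fun i _ => ?_
  rw [integral_finsetSum _ fun j _ => hint i j, Finset.sum_eq_single i,
    integral_increment_mul_self ν hf i]
  · intro j _ hji
    rcases lt_or_gt_of_ne hji with hlt | hgt
    · exact integral_increment_mul_of_lt ν hmean hlt
    · simp only [mul_comm (increment f a c i _)]
      exact integral_increment_mul_of_lt ν hmean hgt
  · simp

lemma ae_stopped_mem_Icc (ha : a ≤ 0) (hc : 0 ≤ c) (hfb : ∀ᵐ x ∂ν, |f x| ≤ b) :
    ∀ᵐ v ∂𝐏, stopped f a c v ∈ Set.Icc (a - b) (c + b) := by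
  obtain ⟨x, hx⟩ := hfb.exists
  filter_upwards [ae_forall_abs_le ν hfb] with v hv
  exact stopped_mem_Icc ha hc ((abs_nonneg _).trans hx) hv

lemma memLp_stopped (hf : Measurable f) (ha : a ≤ 0) (hc : 0 ≤ c)
    (hfb : ∀ᵐ x ∂ν, |f x| ≤ b) (p : ENNReal) : MemLp (stopped f a c) p 𝐏 := by
  refine MemLp.of_bound (measurable_stopped hf a c).aestronglyMeasurable (c + b - a) ?_
  obtain ⟨x, hx⟩ := hfb.exists
  have hb := (abs_nonneg _).trans hx
  filter_upwards [ae_stopped_mem_Icc ν ha hc hfb] with v hv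
  rw [Real.norm_eq_abs, abs_le]
  constructor <;> linarith [hv.1, hv.2]

-- `V² ≤ (c + b)(b - a) + (a + c) V` on `[a - b, c + b]`, and `E V = 0`.
lemma integral_stopped_sq_le (hf : Measurable f) (ha : a ≤ 0) (hc : 0 ≤ c)
    (hfb : ∀ᵐ x ∂ν, |f x| ≤ b) (hmean : ∫ x, f x ∂ν = 0) :
    ∫ v, stopped f a c v ^ 2 ∂𝐏 ≤ (c + b) * (b - a) := by
  have hint := (memLp_stopped (n := n) ν hf ha hc hfb 1).integrable le_rfl
  calc ∫ v, stopped f a c v ^ 2 ∂𝐏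
      ≤ ∫ v, (c + b) * (b - a) + (a + c) * stopped f a c v ∂𝐏 := by
        refine integral_mono_ae (memLp_stopped ν hf ha hc hfb 2).integrable_sq
          ((integrable_const _).add (hint.const_mul _)) ?_
        filter_upwards [ae_stopped_mem_Icc ν ha hc hfb] with v hv
        nlinarith [hv.1, hv.2]
    _ = (c + b) * (b - a) := by
        rw [integral_add (integrable_const _) (hint.const_mul _), integral_const,
          integral_const_mul, integral_stopped ν hf hfb hmean]
        simp

lemma mul_measureReal_staysIn_le (hf : Measurable f) (ha : a ≤ 0) (hc : 0 ≤ c)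
    (hfb : ∀ᵐ x ∂ν, |f x| ≤ b) (hmean : ∫ x, f x ∂ν = 0) :
    (∫ x, f x ^ 2 ∂ν) * n * 𝐏.real {v | StaysIn f a c n v}
      ≤ (c + b) * (b - a) := by
  have hmono : ∀ i : Fin n, 𝐏.real {v | StaysIn f a c n v}
      ≤ 𝐏.real {v | StaysIn f a c i v} := fun i =>
    measureReal_mono fun v hv l hl => hv l (hl.trans i.is_lt.le)
  calc (∫ x, f x ^ 2 ∂ν) * n * 𝐏.real {v | StaysIn f a c n v}
      ≤ (∫ x, f x ^ 2 ∂ν) * ∑ i : Fin n,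
          𝐏.real {v | StaysIn f a c i v} := by
        rw [mul_assoc]
        refine mul_le_mul_of_nonneg_left ?_ (integral_nonneg fun x => sq_nonneg (f x))
        simpa using Finset.sum_le_sum fun i (_ : i ∈ Finset.univ) => hmono i
    _ = ∫ v, stopped f a c v ^ 2 ∂𝐏 :=
        (integral_stopped_sq ν hf hfb hmean).symm
    _ ≤ (c + b) * (b - a) := integral_stopped_sq_le ν hf ha hc hfb hmean

lemma mul_measureReal_stopped_lt_le (hf : Measurable f) (ha : a ≤ 0) (hc : 0 ≤ c)
    (hfb : ∀ᵐ x ∂ν, |f x| ≤ b) (hmean : ∫ x, f x ∂ν = 0) :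
    (c + b - a) * 𝐏.real {v | stopped f a c v < a} ≤ c + b := by
  have hint := (memLp_stopped (n := n) ν hf ha hc hfb 1).integrable le_rfl
  obtain ⟨x, hx⟩ := hfb.exists
  have hb := (abs_nonneg _).trans hx
  calc (c + b - a) * 𝐏.real {v | stopped f a c v < a}
      ≤ (c + b - a) * 𝐏.real
          {v | c + b - a ≤ c + b - stopped f a c v} := by
        refine mul_le_mul_of_nonneg_left (measureReal_mono fun v hv => ?_) (by linarith)
        simp only [Set.mem_ofPred_eq] at hv ⊢
        linarith
    _ ≤ ∫ v, c + b - stopped f a c v ∂𝐏 := by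
        refine mul_meas_ge_le_integral_of_nonneg ?_ ((integrable_const _).sub hint) _
        filter_upwards [ae_stopped_mem_Icc ν ha hc hfb] with v hv
        simp only [Pi.zero_apply, Pi.sub_apply]
        linarith [hv.2]
    _ = c + b := by
        rw [integral_sub (integrable_const _) hint, integral_stopped ν hf hfb hmean]
        simp

theorem measureReal_partialSum_le_le (hf : Measurable f) (hfb : ∀ᵐ x ∂ν, |f x| ≤ b)
    (hmean : ∫ x, f x ∂ν = 0) (hvar : 0 < ∫ x, f x ^ 2 ∂ν) (hn : 1 ≤ n) {y : ℝ}
    (hy : 1 ≤ y) :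
    𝐏.real {v | ∀ k ∈ Finset.Icc 1 n, partialSum f k v ≤ y}
      ≤ ((1 + b) + (1 + b) ^ 2 / ∫ x, f x ^ 2 ∂ν) * y / √n := by
  set s2 := ∫ x, f x ^ 2 ∂ν
  set z := √(n : ℝ)
  have hz : 1 ≤ z := Real.one_le_sqrt.2 (by exact_mod_cast hn)
  have hzn : (n : ℝ) = z ^ 2 := (Real.sq_sqrt (Nat.cast_nonneg n)).symm
  obtain ⟨x, hx⟩ := hfb.exists
  have hb : 0 ≤ b := (abs_nonneg _).trans hx
  have ha : -z ≤ 0 := by linarith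
  have hc : 0 ≤ y := by linarith
  have hstay := mul_measureReal_staysIn_le (n := n) ν hf ha hc hfb hmean
  have hexit := mul_measureReal_stopped_lt_le (n := n) ν hf ha hc hfb hmean
  rw [hzn] at hstay
  have hyb : y + b ≤ (1 + b) * y := by nlinarith
  have hzb : b - -z ≤ (1 + b) * z := by nlinarith
  have hprod := mul_le_mul hyb hzb (by linarith) (by positivity)
  have hstay' : 𝐏.real {v | StaysIn f (-z) y n v}
      ≤ (1 + b) ^ 2 / s2 * y / z := by
    rw [le_div_iff₀ (by linarith), div_mul_eq_mul_div, le_div_iff₀ hvar]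
    nlinarith [measureReal_nonneg (μ := 𝐏)
      (s := {v | StaysIn f (-z) y n v})]
  have hexit' : 𝐏.real {v | stopped f (-z) y v < -z}
      ≤ (1 + b) * y / z := by
    rw [le_div_iff₀ (by linarith)]
    nlinarith [measureReal_nonneg (μ := 𝐏)
      (s := {v | stopped f (-z) y v < -z})]
  calc 𝐏.real {v | ∀ k ∈ Finset.Icc 1 n, partialSum f k v ≤ y}
      ≤ 𝐏.real {v | StaysIn f (-z) y n v}
          + 𝐏.real {v | stopped f (-z) y v < -z} :=
        (measureReal_mono (setOf_partialSum_le_subset ha hc)).trans (measureReal_union_le _ _)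
    _ ≤ (1 + b) ^ 2 / s2 * y / z + (1 + b) * y / z := add_le_add hstay' hexit'
    _ = ((1 + b) + (1 + b) ^ 2 / s2) * y / z := by ring

end RandomWalk

lemma integral_fst_sub_snd {μ : Measure ℝ} [IsProbabilityMeasure μ]
    (h : Integrable (fun x => x) μ) : ∫ p, p.1 - p.2 ∂μ.prod μ = 0 := by
  rw [integral_sub (h.comp_fst μ) (h.comp_snd μ), integral_fun_fst (fun x => x),
    integral_fun_snd (fun x => x), sub_self]

lemma integral_fst_sub_snd_sq {μ : Measure ℝ} [IsProbabilityMeasure μ] {m : ℝ}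
    (h₁ : Integrable (fun x => x) μ) (h₂ : Integrable (fun x => (x - m) ^ 2) μ)
    (hm : ∫ x, x ∂μ = m) :
    ∫ p, (p.1 - p.2) ^ 2 ∂μ.prod μ = 2 * ∫ x, (x - m) ^ 2 ∂μ := by
  have hc : Integrable (fun x => x - m) μ := h₁.sub (integrable_const m)
  have hc₀ : ∫ x, x - m ∂μ = 0 := by
    rw [integral_sub h₁ (integrable_const m), hm]
    simp
  have hexp : ∀ p : ℝ × ℝ, (p.1 - p.2) ^ 2
      = ((p.1 - m) ^ 2 + (p.2 - m) ^ 2) - 2 * ((p.1 - m) * (p.2 - m)) := fun p => by ring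
  have hsq : Integrable (fun p : ℝ × ℝ => (p.1 - m) ^ 2 + (p.2 - m) ^ 2) (μ.prod μ) :=
    (h₂.comp_fst μ).add (h₂.comp_snd μ)
  simp only [hexp]
  rw [integral_sub hsq ((hc.mul_prod hc).const_mul 2),
    integral_add (h₂.comp_fst μ) (h₂.comp_snd μ), integral_const_mul,
    integral_fun_fst (fun x => (x - m) ^ 2), integral_fun_snd (fun x => (x - m) ^ 2),
    integral_prod_mul (L := ℝ) (fun x => x - m) (fun x => x - m), hc₀]
  simp only [probReal_univ, one_smul, mul_zero, sub_zero]
  ring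

lemma QueueParams.ae_mem_Icc (Q : QueueParams) : ∀ᵐ x ∂Q.μ, x ∈ Set.Icc Q.cm Q.cp :=
  have := Q.μ_prob
  ae_iff.2 ((prob_compl_eq_zero_iff measurableSet_Icc).2 Q.μ_supp)

lemma QueueParams.integrable_of_continuous (Q : QueueParams) {g : ℝ → ℝ} (hg : Continuous g) :
    Integrable g Q.μ := by
  have := Q.μ_prob
  rw [← Measure.restrict_eq_self_of_ae_mem Q.ae_mem_Icc]
  exact hg.continuousOn.integrableOn_compact isCompact_Icc

theorem symWalkProb_upper_bound (Q : QueueParams) :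
    ∃ (C : ℝ) (δ : ℕ → ℝ), Filter.Tendsto δ Filter.atTop (nhds 0) ∧
      ∀ j : ℕ, 1 ≤ j → ∀ y : ℝ, 1 ≤ y →
        Q.symWalkProb j y ≤ C * y * (j : ℝ) ^ (-(1 : ℝ) / 2) + δ j := by
  have := Q.μ_prob
  have hstep : ∀ᵐ p ∂Q.μ.prod Q.μ, |p.1 - p.2| ≤ Q.cp - Q.cm := by
    filter_upwards [Measure.quasiMeasurePreserving_fst.ae Q.ae_mem_Icc,
      Measure.quasiMeasurePreserving_snd.ae Q.ae_mem_Icc] with p h₁ h₂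
    rw [abs_le]
    constructor <;> linarith [h₁.1, h₁.2, h₂.1, h₂.2]
  have hid := Q.integrable_of_continuous continuous_id
  have hvar := integral_fst_sub_snd_sq hid (Q.integrable_of_continuous (by fun_prop)) Q.μ_mean
  refine ⟨(1 + (Q.cp - Q.cm)) + (1 + (Q.cp - Q.cm)) ^ 2 / (2 * ∫ x, (x - 1) ^ 2 ∂Q.μ),
    fun _ => 0, tendsto_const_nhds, fun j hj y hy => ?_⟩
  have h := RandomWalk.measureReal_partialSum_le_le (Q.μ.prod Q.μ) (f := fun p => p.1 - p.2)
    (by fun_prop) hstep (integral_fst_sub_snd hid) (by rw [hvar]; linarith [Q.μ_var_pos]) hj hy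
  rw [hvar] at h
  -- `Q.symWalkProb j y` unfolds to the left-hand side of `h`.
  rw [neg_div, Real.rpow_neg (Nat.cast_nonneg j), ← Real.sqrt_eq_rpow, add_zero,
    ← div_eq_mul_inv]
  exact h
end
end

section
/- Let (ξ_i)_{i≥1} be i.i.d. with law μ. Fix an integer j ≥ 1, a real y, and reals a_1, …, a_j, and suppose the event E = { Σ_{i=1}^{k} ξ_i < a_k for all 1 ≤ k ≤ j } has positive probability. Then P( (ξ_1, …, ξ_j) is (j,y)-good | E ) ≥ 1/2. (This is the content of the paper's Lemma 2: conditionally on a long wave having just occurred, with probability at least 1/2 the new inter-customer spacings form a (j,y)-good sequence.) -/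
open MeasureTheory ProbabilityTheory Filter

noncomputable section

/-!
Write `q(x) = q_{j,y}(x_1, …, x_j)`. Then `q` is monotone in the spacings, the wave event
`E = {ξ_1 + ⋯ + ξ_k < a_k, k ≤ j}` is a down-set of `(ξ_1, …, ξ_j)`, and by Fubini
`q(j,y) = 𝔼[q(ξ'')]`. The Harris (FKG) inequality for the product measure `μ^j` gives
`𝔼[q(ξ); E] ≤ q(j,y) P(E)`, so by Markov's inequality under `P(· | E)` the spacings fail to be
`(j,y)`-good, i.e. `q(ξ) > 2 q(j,y)`, with conditional probability at most `1/2`.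
-/

section Harris

variable {α : Type*} [MeasurableSpace α]

theorem integral_mul_le_of_monotone_of_antitone [LinearOrder α] {μ : Measure α}
    [IsProbabilityMeasure μ] {f g : α → ℝ} (hf : Monotone f) (hg : Antitone g)
    (hfi : Integrable f μ) (hgi : Integrable g μ) (hfgi : Integrable (fun x => f x * g x) μ) :
    ∫ x, f x * g x ∂μ ≤ (∫ x, f x ∂μ) * ∫ x, g x ∂μ := by
  set A := ∫ x, f x ∂μ
  set B := ∫ x, g x ∂μ
  set C := ∫ x, f x * g x ∂μ
  have inner (y : α) :
      ∫ x, (f x - f y) * (g x - g y) ∂μ = C - A * g y - f y * B + f y * g y := by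
    simp_rw [sub_mul, mul_sub]
    rw [integral_sub, integral_sub, integral_sub, integral_mul_const, integral_const_mul,
      integral_const]
    · simp only [probReal_univ, one_smul]; ring
    all_goals fun_prop
  have outer : ∫ y, ∫ x, (f x - f y) * (g x - g y) ∂μ ∂μ = 2 * (C - A * B) := by
    simp_rw [inner]
    rw [integral_add, integral_sub, integral_sub, integral_mul_const, integral_const_mul,
      integral_const]
    · simp only [probReal_univ, one_smul]; ring
    all_goals fun_prop
  have nonpos : ∫ y, ∫ x, (f x - f y) * (g x - g y) ∂μ ∂μ ≤ 0 :=
    integral_nonpos fun y => integral_nonpos fun x => by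
      rcases le_total x y with h | h
      · exact mul_nonpos_of_nonpos_of_nonneg (sub_nonpos.2 (hf h)) (sub_nonneg.2 (hg h))
      · exact mul_nonpos_of_nonneg_of_nonpos (sub_nonneg.2 (hf h)) (sub_nonpos.2 (hg h))
  linarith

section FinCons

variable {n : ℕ} {μ : Fin (n + 1) → Measure α} [∀ i, SigmaFinite (μ i)]
  {E : Type*} [NormedAddCommGroup E] {h : (Fin (n + 1) → α) → E}

theorem MeasureTheory.Integrable.comp_fin_cons (hh : Integrable h (Measure.pi μ)) :
    Integrable (fun p : α × (Fin n → α) => h (Fin.cons p.1 p.2))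
      ((μ 0).prod (Measure.pi fun i => μ i.succ)) := by
  rw [← (measurePreserving_piFinSuccAbove μ 0).symm.integrable_comp_emb
    (MeasurableEquiv.measurableEmbedding _)] at hh
  simpa [MeasurableEquiv.piFinSuccAbove_symm_apply, Fin.insertNthEquiv, Fin.insertNth_zero,
    Function.comp_def] using hh

theorem integral_pi_fin_succ [NormedSpace ℝ E] (hh : Integrable h (Measure.pi μ)) :
    ∫ x, h x ∂Measure.pi μ =
      ∫ t, ∫ x, h (Fin.cons t x) ∂Measure.pi (fun i => μ i.succ) ∂μ 0 := by
  rw [← (measurePreserving_piFinSuccAbove μ 0).symm.integral_comp', integral_prod _ ?_]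
  · simp [MeasurableEquiv.piFinSuccAbove_symm_apply, Fin.insertNthEquiv]
  · simpa [MeasurableEquiv.piFinSuccAbove_symm_apply, Fin.insertNthEquiv, Fin.insertNth_zero,
      Function.comp_def] using hh.comp_fin_cons

end FinCons

theorem measurable_fin_cons {n : ℕ} (t : α) :
    Measurable fun x : Fin n → α => (Fin.cons t x : Fin (n + 1) → α) :=
  measurable_pi_lambda _ fun i =>
    Fin.cases (by simp) (fun j => by simpa using measurable_pi_apply j) i

theorem monotone_integral_fin_cons [Preorder α] {n : ℕ} {ν : Measure (Fin n → α)}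
    [IsFiniteMeasure ν] {f : (Fin (n + 1) → α) → ℝ} (hf : Measurable f) (hfm : Monotone f)
    {C : ℝ} (hfC : ∀ x, ‖f x‖ ≤ C) :
    Monotone fun t => ∫ x, f (Fin.cons t x) ∂ν := by
  have hi (t : α) : Integrable (fun x => f (Fin.cons t x)) ν :=
    .of_bound (hf.comp (measurable_fin_cons t)).aestronglyMeasurable C (.of_forall fun _ => hfC _)
  exact fun t t' ht =>
    integral_mono (hi t) (hi t') fun x => hfm (Fin.cons_le_cons.2 ⟨ht, le_rfl⟩)

theorem integral_pi_mul_le_of_monotone_of_antitone [LinearOrder α] {n : ℕ}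
    {μ : Fin n → Measure α} [∀ i, IsProbabilityMeasure (μ i)] {f g : (Fin n → α) → ℝ}
    (hf : Measurable f) (hg : Measurable g) (hfm : Monotone f) (hgm : Antitone g) {C : ℝ}
    (hfC : ∀ x, ‖f x‖ ≤ C) (hgC : ∀ x, ‖g x‖ ≤ C) :
    ∫ x, f x * g x ∂Measure.pi μ ≤ (∫ x, f x ∂Measure.pi μ) * ∫ x, g x ∂Measure.pi μ := by
  induction n with
  | zero => simp [integral_unique]
  | succ n ih =>
    have hfi : Integrable f (Measure.pi μ) := .of_bound hf.aestronglyMeasurable C (.of_forall hfC)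
    have hgi : Integrable g (Measure.pi μ) := .of_bound hg.aestronglyMeasurable C (.of_forall hgC)
    have hfg : Integrable (fun x => f x * g x) (Measure.pi μ) :=
      .of_bound (hf.mul hg).aestronglyMeasurable (C * C) (.of_forall fun x => by
        rw [norm_mul]
        exact mul_le_mul (hfC x) (hgC x) (norm_nonneg _) ((norm_nonneg _).trans (hfC x)))
    set ν : Measure (Fin n → α) := Measure.pi fun i => μ i.succ
    set F := fun t => ∫ x, f (Fin.cons t x) ∂ν
    set G := fun t => ∫ x, g (Fin.cons t x) ∂ν
    have hFi : Integrable F (μ 0) := hfi.comp_fin_cons.integral_prod_left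
    have hGi : Integrable G (μ 0) := hgi.comp_fin_cons.integral_prod_left
    have hGC (t : α) : ‖G t‖ ≤ C := by
      simpa using
        norm_integral_le_of_norm_le_const (μ := ν) (.of_forall fun x => hgC (Fin.cons t x))
    have hGa : Antitone G := by
      simpa [integral_neg] using
        (monotone_integral_fin_cons (ν := ν) hg.neg hgm.neg (by simpa using hgC)).neg
    have hFGi : Integrable (fun t => F t * G t) (μ 0) :=
      hFi.mul_bdd hGi.aestronglyMeasurable (.of_forall hGC)
    calc ∫ x, f x * g x ∂Measure.pi μ
        = ∫ t, ∫ x, f (Fin.cons t x) * g (Fin.cons t x) ∂ν ∂μ 0 :=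
          integral_pi_fin_succ hfg
      _ ≤ ∫ t, F t * G t ∂μ 0 :=
          integral_mono hfg.comp_fin_cons.integral_prod_left hFGi fun t =>
            ih (hf.comp (measurable_fin_cons t)) (hg.comp (measurable_fin_cons t))
              (fun _ _ hx => hfm (Fin.cons_le_cons.2 ⟨le_rfl, hx⟩))
              (fun _ _ hx => hgm (Fin.cons_le_cons.2 ⟨le_rfl, hx⟩)) (fun _ => hfC _)
              (fun _ => hgC _)
      _ ≤ (∫ t, F t ∂μ 0) * ∫ t, G t ∂μ 0 :=
          integral_mul_le_of_monotone_of_antitone (monotone_integral_fin_cons hf hfm hfC) hGa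
            hFi hGi hFGi
      _ = (∫ x, f x ∂Measure.pi μ) * ∫ x, g x ∂Measure.pi μ := by
          rw [integral_pi_fin_succ hfi, integral_pi_fin_succ hgi]

theorem IsLowerSet.antitone_indicator_one {β : Type*} [Preorder β] {s : Set β}
    (hs : IsLowerSet s) : Antitone (s.indicator fun _ => (1 : ℝ)) := by
  intro x y hxy
  by_cases hy : y ∈ s
  · simp [hy, hs hxy hy]
  · simp only [Set.indicator_of_notMem hy]
    exact Set.indicator_nonneg (fun _ _ => zero_le_one) x

theorem IsLowerSet.setIntegral_le_integral_mul_measureReal [LinearOrder α] {n : ℕ}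
    {μ : Fin n → Measure α} [∀ i, IsProbabilityMeasure (μ i)] {f : (Fin n → α) → ℝ}
    (hf : Measurable f) (hfm : Monotone f) {C : ℝ} (hfC : ∀ x, ‖f x‖ ≤ C)
    {E : Set (Fin n → α)} (hE : MeasurableSet E) (hEl : IsLowerSet E) :
    ∫ x in E, f x ∂Measure.pi μ ≤ (∫ x, f x ∂Measure.pi μ) * (Measure.pi μ).real E := by
  have key := integral_pi_mul_le_of_monotone_of_antitone (μ := μ) hf
    (measurable_const.indicator hE) hfm hEl.antitone_indicator_one (C := max C 1)
    (fun x => (hfC x).trans (le_max_left _ _))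
    (fun x => (norm_indicator_le_norm_self _ x).trans (by simp))
  have hind : (fun x => f x * E.indicator (fun _ => (1 : ℝ)) x) = E.indicator f := by
    ext x; by_cases hx : x ∈ E <;> simp [hx]
  rwa [hind, integral_indicator hE, integral_indicator_const _ hE, smul_eq_mul, mul_one] at key

theorem IsLowerSet.measureReal_inter_lt_mul_integral_le [LinearOrder α] {n : ℕ}
    {μ : Fin n → Measure α} [∀ i, IsProbabilityMeasure (μ i)] {f : (Fin n → α) → ℝ}
    (hf : Measurable f) (hfm : Monotone f) (hf0 : 0 ≤ f) {C : ℝ} (hfC : ∀ x, f x ≤ C)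
    {E : Set (Fin n → α)} (hE : MeasurableSet E) (hEl : IsLowerSet E) {c : ℝ} (hc : 0 < c) :
    (Measure.pi μ).real (E ∩ {x | c * ∫ x, f x ∂Measure.pi μ < f x}) ≤
      c⁻¹ * (Measure.pi μ).real E := by
  set ν := Measure.pi μ
  set q := ∫ x, f x ∂ν
  have hfC' (x) : ‖f x‖ ≤ C := by rw [Real.norm_of_nonneg (hf0 x)]; exact hfC x
  have hfi : Integrable f ν := .of_bound hf.aestronglyMeasurable C (.of_forall hfC')
  rcases (integral_nonneg hf0 : 0 ≤ q).eq_or_lt with hq0 | hqpos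
  · have hnull : ν {x | f x ≠ 0} = 0 :=
      ae_iff.1 ((integral_eq_zero_iff_of_nonneg hf0 hfi).1 hq0.symm)
    have : ν (E ∩ {x | c * q < f x}) = 0 :=
      measure_mono_null (fun x hx => ((mul_nonneg hc.le hq0.le).trans_lt hx.2).ne') hnull
    simp only [measureReal_def, this, ENNReal.toReal_zero]
    positivity
  · have markov : c * q * ν.real (E ∩ {x | c * q < f x}) ≤ ∫ x in E, f x ∂ν := by
      refine le_trans ?_ (mul_meas_ge_le_integral_of_nonneg (.of_forall hf0) hfi.restrict (c * q))
      rw [measureReal_restrict_apply (measurableSet_le measurable_const hf)]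
      exact mul_le_mul_of_nonneg_left
        (measureReal_mono fun x hx => ⟨(show c * q < f x from hx.2).le, hx.1⟩)
        (mul_nonneg hc.le hqpos.le)
    rw [le_inv_mul_iff₀ hc]
    refine le_of_mul_le_mul_left ?_ hqpos
    nlinarith [hEl.setIntegral_le_integral_mul_measureReal (μ := μ) hf hfm hfC' hE]

theorem IsLowerSet.one_sub_inv_le_cond_le_mul_integral [LinearOrder α] {n : ℕ}
    {μ : Fin n → Measure α} [∀ i, IsProbabilityMeasure (μ i)] {f : (Fin n → α) → ℝ}
    (hf : Measurable f) (hfm : Monotone f) (hf0 : 0 ≤ f) {C : ℝ} (hfC : ∀ x, f x ≤ C)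
    {E : Set (Fin n → α)} (hE : MeasurableSet E) (hEl : IsLowerSet E)
    (hE0 : Measure.pi μ E ≠ 0) {c : ℝ} (hc : 0 < c) :
    1 - c⁻¹ ≤ ((Measure.pi μ)[{x | f x ≤ c * ∫ x, f x ∂Measure.pi μ} | E]).toReal := by
  set ν := Measure.pi μ
  set B := {x | c * ∫ x, f x ∂ν < f x}
  have : IsProbabilityMeasure ν[|E] := cond_isProbabilityMeasure hE0
  have hEpos : 0 < ν.real E := ENNReal.toReal_pos hE0 (measure_ne_top _ _)
  have hcondB : ν[|E].real B ≤ c⁻¹ := by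
    rw [measureReal_def, cond_apply hE, ENNReal.toReal_mul, ENNReal.toReal_inv]
    calc (ν.real E)⁻¹ * ν.real (E ∩ B) ≤ (ν.real E)⁻¹ * (c⁻¹ * ν.real E) :=
          mul_le_mul_of_nonneg_left (hEl.measureReal_inter_lt_mul_integral_le hf hfm hf0 hfC hE hc)
            (inv_nonneg.2 hEpos.le)
      _ = c⁻¹ := by field_simp
  have hcomp : {x | f x ≤ c * ∫ x, f x ∂ν} = Bᶜ := by ext; simp [B]
  rw [hcomp, ← measureReal_def, probReal_compl_eq_one_sub (measurableSet_lt measurable_const hf)]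
  linarith

end Harris

theorem ProbabilityTheory.iIndepFun.map_fin_eq_pi {Ω β : Type*} [MeasurableSpace Ω]
    [MeasurableSpace β] {P : Measure Ω} [IsProbabilityMeasure P] {X : ℕ → Ω → β}
    {ν : Measure β} (hind : iIndepFun X P) (hX : ∀ i, Measurable (X i))
    (hlaw : ∀ i, P.map (X i) = ν) (j : ℕ) :
    P.map (fun ω (i : Fin j) => X i ω) = Measure.pi fun _ => ν := by
  rw [(iIndepFun_iff_map_fun_eq_pi_map (f := fun i : Fin j => X i)
    fun i => (hX i).aemeasurable).1 (hind.precomp Fin.val_injective)]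
  simp [hlaw]

theorem cond_preimage_eq_cond_map {Ω β : Type*} [MeasurableSpace Ω] [MeasurableSpace β]
    {P : Measure Ω} {Φ : Ω → β} (hΦ : Measurable Φ) {s t : Set β} (hs : MeasurableSet s)
    (ht : MeasurableSet t) : P[Φ ⁻¹' t | Φ ⁻¹' s] = (P.map Φ)[t | s] := by
  rw [cond_apply (hΦ hs), cond_apply hs, Measure.map_apply hΦ hs,
    Measure.map_apply hΦ (hs.inter ht), Set.preimage_inter]

namespace QueueParams

/-- Coordinate `u i` stands for the spacing `x_{i+1}`, so `prefixSum k u = x_1 + ⋯ + x_k`. -/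
def prefixSum {j : ℕ} (k : ℕ) (u : Fin j → ℝ) : ℝ :=
  ∑ i ∈ Finset.univ.filter (fun i : Fin j => (i : ℕ) < k), u i

theorem measurable_prefixSum {j : ℕ} (k : ℕ) : Measurable (prefixSum (j := j) k) :=
  Finset.measurable_sum _ fun i _ => measurable_pi_apply i

theorem monotone_prefixSum {j : ℕ} (k : ℕ) : Monotone (prefixSum (j := j) k) :=
  fun _ _ h => Finset.sum_le_sum fun i _ => h i

theorem sum_Icc_one_eq_prefixSum {j k : ℕ} (hk : k ≤ j) (x : ℕ → ℝ) :
    ∑ i ∈ Finset.Icc 1 k, x i = prefixSum k (fun i : Fin j => x (i + 1)) := by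
  have hfilter : (Finset.range j).filter (· < k) = Finset.range k := by
    ext m; simp only [Finset.mem_filter, Finset.mem_range]; omega
  rw [prefixSum, Finset.sum_filter,
    Fin.sum_univ_eq_sum_range (fun m => if m < k then x (m + 1) else 0), ← Finset.sum_filter,
    hfilter, ← Finset.Ico_add_one_right_eq_Icc, Finset.sum_Ico_eq_sum_range]
  simp [add_comm]

theorem measurableSet_setOf_prefixSum_sub_le (j : ℕ) (y : ℝ) :
    MeasurableSet {p : (Fin j → ℝ) × (Fin j → ℝ) |
      ∀ k ∈ Finset.Icc 1 j, prefixSum k p.1 - prefixSum k p.2 ≤ y} := by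
  simp only [Set.ofPred_forall]
  exact .iInter fun k => .iInter fun _ => measurableSet_le
    (((measurable_prefixSum k).comp measurable_fst).sub
      ((measurable_prefixSum k).comp measurable_snd)) measurable_const

theorem measurableSet_setOf_prefixSum_lt (j : ℕ) (a : ℕ → ℝ) :
    MeasurableSet {u : Fin j → ℝ | ∀ k ∈ Finset.Icc 1 j, prefixSum k u < a k} := by
  simp only [Set.ofPred_forall]
  exact .iInter fun k => .iInter fun _ => measurableSet_lt (measurable_prefixSum k) measurable_const

theorem isLowerSet_setOf_prefixSum_lt (j : ℕ) (a : ℕ → ℝ) :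
    IsLowerSet {u : Fin j → ℝ | ∀ k ∈ Finset.Icc 1 j, prefixSum k u < a k} :=
  fun _ _ hvu hu k hk => (monotone_prefixSum k hvu).trans_lt (hu k hk)

variable (Q : QueueParams)

instance isProbabilityMeasure_μ : IsProbabilityMeasure Q.μ := Q.μ_prob

def condWalkProbFin (j : ℕ) (y : ℝ) (u : Fin j → ℝ) : ℝ :=
  ((Measure.pi fun _ : Fin j => Q.μ)
    {v | ∀ k ∈ Finset.Icc 1 j, prefixSum k v - prefixSum k u ≤ y}).toReal

theorem condWalkProb_eq_condWalkProbFin (j : ℕ) (y : ℝ) (x : ℕ → ℝ) :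
    Q.condWalkProb j y x = Q.condWalkProbFin j y (fun i => x (i + 1)) := by
  unfold condWalkProb condWalkProbFin
  congr 3 with v
  refine forall₂_congr fun k hk => ?_
  rw [sum_Icc_one_eq_prefixSum (Finset.mem_Icc.1 hk).2]
  rfl

theorem measurable_condWalkProbFin (j : ℕ) (y : ℝ) : Measurable (Q.condWalkProbFin j y) :=
  (measurable_measure_prodMk_right (measurableSet_setOf_prefixSum_sub_le j y)).ennreal_toReal

theorem monotone_condWalkProbFin (j : ℕ) (y : ℝ) : Monotone (Q.condWalkProbFin j y) :=
  fun _ _ h => ENNReal.toReal_mono (measure_ne_top _ _) (measure_mono fun _ hv k hk =>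
    (sub_le_sub_left (monotone_prefixSum k h) _).trans (hv k hk))

theorem condWalkProbFin_nonneg (j : ℕ) (y : ℝ) (u : Fin j → ℝ) :
    0 ≤ Q.condWalkProbFin j y u :=
  ENNReal.toReal_nonneg

theorem condWalkProbFin_le_one (j : ℕ) (y : ℝ) (u : Fin j → ℝ) :
    Q.condWalkProbFin j y u ≤ 1 :=
  ENNReal.toReal_le_of_le_ofReal zero_le_one (by simpa using prob_le_one)

theorem symWalkProb_eq_integral (j : ℕ) (y : ℝ) :
    Q.symWalkProb j y = ∫ u, Q.condWalkProbFin j y u ∂Measure.pi fun _ => Q.μ := by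
  set D := {p : (Fin j → ℝ) × (Fin j → ℝ) |
    ∀ k ∈ Finset.Icc 1 j, prefixSum k p.1 - prefixSum k p.2 ≤ y}
  have hD : MeasurableSet D := measurableSet_setOf_prefixSum_sub_le j y
  set ν := Measure.pi fun _ : Fin j => Q.μ
  set e := MeasurableEquiv.arrowProdEquivProdArrow ℝ ℝ (Fin j)
  calc Q.symWalkProb j y = ((Measure.pi fun _ => Q.μ.prod Q.μ) (e ⁻¹' D)).toReal := by
        unfold symWalkProb
        congr 2 with v
        simp [D, e, prefixSum, Finset.sum_sub_distrib, MeasurableEquiv.arrowProdEquivProdArrow,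
          Equiv.arrowProdEquivProdArrow]
    _ = (∫⁻ u, ν ((fun v => (v, u)) ⁻¹' D) ∂ν).toReal := by
        rw [(measurePreserving_arrowProdEquivProdArrow ℝ ℝ (Fin j) _ _).measure_preimage_equiv,
          Measure.prod_apply_symm hD]
    _ = ∫ u, (ν ((fun v => (v, u)) ⁻¹' D)).toReal ∂ν :=
        (integral_toReal (measurable_measure_prodMk_right hD).aemeasurable
          (.of_forall fun _ => measure_lt_top _ _)).symm

end QueueParams

theorem prob_good_given_wave_ge_half_general (Q : QueueParams) (Ω : Type) [MeasurableSpace Ω]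
    (P : Measure Ω) (hP : IsProbabilityMeasure P)
    (ξ : ℕ → Ω → ℝ) (hmeas : ∀ i, 1 ≤ i → Measurable (ξ i))
    (hlaw : ∀ i, 1 ≤ i → P.map (ξ i) = Q.μ)
    (hindep : ProbabilityTheory.iIndepFun
      (fun i : ℕ => ξ (i + 1)) P)
    (j : ℕ) (y : ℝ) (a : ℕ → ℝ)
    (hpos : 0 < P {ω | ∀ k ∈ Finset.Icc 1 j, (∑ i ∈ Finset.Icc 1 k, ξ i ω) < a k}) :
    1 / 2 ≤ ((ProbabilityTheory.cond P
        {ω | ∀ k ∈ Finset.Icc 1 j, (∑ i ∈ Finset.Icc 1 k, ξ i ω) < a k})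
      {ω | Q.IsGood j y (fun i => ξ i ω)}).toReal := by
  set Φ : Ω → Fin j → ℝ := fun ω i => ξ (i + 1) ω
  have hΦ : Measurable Φ := measurable_pi_lambda _ fun i => hmeas _ (Nat.le_add_left 1 i)
  have hmap : P.map Φ = Measure.pi fun _ => Q.μ :=
    hindep.map_fin_eq_pi (fun i => hmeas _ (Nat.le_add_left 1 i))
      (fun i => hlaw _ (Nat.le_add_left 1 i)) j
  set E := {u : Fin j → ℝ | ∀ k ∈ Finset.Icc 1 j, QueueParams.prefixSum k u < a k}
  have hE : MeasurableSet E := QueueParams.measurableSet_setOf_prefixSum_lt j a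
  have hEΦ : {ω | ∀ k ∈ Finset.Icc 1 j, (∑ i ∈ Finset.Icc 1 k, ξ i ω) < a k} = Φ ⁻¹' E := by
    ext ω
    exact forall₂_congr fun k hk => by
      rw [QueueParams.sum_Icc_one_eq_prefixSum (Finset.mem_Icc.1 hk).2]
  have hGΦ : {ω | Q.IsGood j y (fun i => ξ i ω)} = Φ ⁻¹' {u | Q.condWalkProbFin j y u ≤
      2 * ∫ u, Q.condWalkProbFin j y u ∂Measure.pi fun _ => Q.μ} := by
    ext ω
    simp only [QueueParams.IsGood, Q.condWalkProb_eq_condWalkProbFin, Q.symWalkProb_eq_integral]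
    rfl
  rw [hEΦ, ← Measure.map_apply hΦ hE, hmap] at hpos
  rw [hEΦ, hGΦ, cond_preimage_eq_cond_map hΦ hE
    (measurableSet_le (Q.measurable_condWalkProbFin j y) measurable_const), hmap]
  have := (QueueParams.isLowerSet_setOf_prefixSum_lt j a).one_sub_inv_le_cond_le_mul_integral
    (Q.measurable_condWalkProbFin j y) (Q.monotone_condWalkProbFin j y)
    (Q.condWalkProbFin_nonneg j y) (Q.condWalkProbFin_le_one j y) hE hpos.ne' two_pos
  exact (by norm_num : (1 : ℝ) / 2 = 1 - 2⁻¹).trans_le this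

theorem prob_good_given_wave_ge_half (Q : QueueParams) (Ω : Type) [MeasurableSpace Ω]
    (P : Measure Ω) (hP : IsProbabilityMeasure P)
    (ξ : ℕ → Ω → ℝ) (hmeas : ∀ i, 1 ≤ i → Measurable (ξ i))
    (hlaw : ∀ i, 1 ≤ i → P.map (ξ i) = Q.μ)
    (hindep : ProbabilityTheory.iIndepFun
      (fun i : ℕ => ξ (i + 1)) P)
    (j : ℕ) (hj : 1 ≤ j) (y : ℝ) (a : ℕ → ℝ)
    (hpos : 0 < P {ω | ∀ k ∈ Finset.Icc 1 j, (∑ i ∈ Finset.Icc 1 k, ξ i ω) < a k}) :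
    1 / 2 ≤ ((ProbabilityTheory.cond P
        {ω | ∀ k ∈ Finset.Icc 1 j, (∑ i ∈ Finset.Icc 1 k, ξ i ω) < a k})
      {ω | Q.IsGood j y (fun i => ξ i ω)}).toReal :=
  prob_good_given_wave_ge_half_general Q Ω P hP ξ hmeas hlaw hindep j y a hpos
end
end

section
/- For the spatial queue process started from any initial configuration, for every even integer j ≥ 4, every integer s > j and every real y > 0: E[ N_C(j/2) ] ≤ 2 · E[ N_B(j/2) ]. (The expected number of long waves up to time j/2 is at most twice the expected number of good long waves.) -/
open MeasureTheory ProbabilityTheory Filter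

noncomputable section

/-!
Fix a step `t` and let `n = s - t`. The configuration `X(t - 1)` and the increments
`ξ_1(t), …, ξ_n(t)` are functions of noise variables disjoint from the `j` fresh increments
`ξ_{n+1}(t), …, ξ_{n+j}(t)`, which are therefore independent of them and have law `μ^j`.
Given the former, `C_t` is a decreasing event of the fresh increments, and so is goodness,
since `q_{j,y}` is increasing. Harris' inequality for the product measure `μ^j` gives
`P(B_t | ⋯) ≥ P(C_t | ⋯) · μ^j(good)`, and `μ^j(good) ≥ 1/2` by Markov's inequality, as
`q_{j,y}(ξ''_1, …, ξ''_j)` has mean `q(j,y)`. Hence `P(C_t) ≤ 2 P(B_t)` for every `t ≥ 1`.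
-/

open scoped ENNReal

section Harris

variable {α : Type*} [MeasurableSpace α] [LinearOrder α] (ν : Measure α) [IsProbabilityMeasure ν]

theorem lintegral_mul_lintegral_le_lintegral_mul_of_antitone {f g : α → ℝ≥0∞}
    (hf : Measurable f) (hg : Measurable g) (hf' : Antitone f) (hg' : Antitone g) :
    (∫⁻ x, f x ∂ν) * ∫⁻ x, g x ∂ν ≤ ∫⁻ x, f x * g x ∂ν := by
  -- `mul_add_mul_le_mul_add_mul` needs additive cancellation, which `ℝ≥0∞` lacks.
  have rearrange {a b c d : ℝ≥0∞} (hab : a ≤ b) (hcd : c ≤ d) : a * d + b * c ≤ a * c + b * d := by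
    obtain ⟨e, rfl⟩ := exists_add_of_le hab
    obtain ⟨k, rfl⟩ := exists_add_of_le hcd
    calc a * (c + k) + (a + e) * c ≤ a * (c + k) + (a + e) * c + e * k := le_self_add
      _ = a * c + (a + e) * (c + k) := by ring
  -- Integrate `(f x - f y) (g x - g y) ≥ 0` against `ν ⊗ ν`.
  have hsym : 2 * ((∫⁻ x, f x ∂ν) * ∫⁻ x, g x ∂ν) ≤ 2 * ∫⁻ x, f x * g x ∂ν :=
    calc 2 * ((∫⁻ x, f x ∂ν) * ∫⁻ x, g x ∂ν)
        = ∫⁻ z : α × α, (f z.1 * g z.2 + f z.2 * g z.1) ∂(ν.prod ν) := by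
          rw [lintegral_add_left (by fun_prop), lintegral_prod_mul hf.aemeasurable hg.aemeasurable]
          simp_rw [mul_comm (f _)]
          rw [lintegral_prod_mul hg.aemeasurable hf.aemeasurable]
          ring
      _ ≤ ∫⁻ z : α × α, (f z.1 * g z.1 + f z.2 * g z.2) ∂(ν.prod ν) := by
          refine lintegral_mono fun z => ?_
          rcases le_total z.1 z.2 with h | h
          · rw [add_comm, add_comm (f z.1 * _)]
            exact rearrange (hf' h) (hg' h)
          · exact rearrange (hf' h) (hg' h)
      _ = 2 * ∫⁻ x, f x * g x ∂ν := by
          rw [lintegral_add_left (by fun_prop),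
            measurePreserving_fst.lintegral_comp (f := fun x => f x * g x) (by fun_prop),
            measurePreserving_snd.lintegral_comp (f := fun x => f x * g x) (by fun_prop), two_mul]
  exact (ENNReal.mul_le_mul_iff_right two_ne_zero ENNReal.ofNat_ne_top).1 hsym

theorem lintegral_mul_lintegral_le_lintegral_mul_pi_of_antitone :
    ∀ {n : ℕ} {f g : (Fin n → α) → ℝ≥0∞}, Measurable f → Measurable g → Antitone f → Antitone g →
      (∫⁻ x, f x ∂(Measure.pi fun _ => ν)) * ∫⁻ x, g x ∂(Measure.pi fun _ => ν)
        ≤ ∫⁻ x, f x * g x ∂(Measure.pi fun _ => ν)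
  | 0, f, g, _, _, _, _ => by simp [lintegral_unique]
  | n + 1, f, g, hf, hg, hf', hg' => by
    set e := MeasurableEquiv.piFinSuccAbove (fun _ : Fin (n + 1) => α) 0
    have he : ∀ p : α × (Fin n → α), e.symm p = Fin.cons p.1 p.2 := fun p => by
      simp [e, MeasurableEquiv.piFinSuccAbove_symm_apply, Fin.insertNthEquiv, Fin.insertNth_zero']
    have hcons : ∀ F : (Fin (n + 1) → α) → ℝ≥0∞, Measurable F →
        ∫⁻ x, F x ∂(Measure.pi fun _ => ν)
          = ∫⁻ a, ∫⁻ w, F (Fin.cons a w) ∂(Measure.pi fun _ => ν) ∂ν := by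
      intro F hF
      rw [← ((measurePreserving_piFinSuccAbove (fun _ => ν) 0).symm).lintegral_comp hF,
        lintegral_prod (fun p => F (e.symm p)) (hF.comp e.symm.measurable).aemeasurable]
      simp only [he]
    have hmeas : ∀ F : (Fin (n + 1) → α) → ℝ≥0∞, Measurable F →
        Measurable fun p : α × (Fin n → α) => F (Fin.cons p.1 p.2) := fun F hF => by
      simpa only [Function.comp_def, he] using hF.comp e.symm.measurable
    have hanti : ∀ F : (Fin (n + 1) → α) → ℝ≥0∞, Antitone F →
        Antitone fun p : α × (Fin n → α) => F (Fin.cons p.1 p.2) := fun F hF p q hpq =>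
      hF (Fin.cons_le_cons.2 hpq)
    calc (∫⁻ x, f x ∂(Measure.pi fun _ => ν)) * ∫⁻ x, g x ∂(Measure.pi fun _ => ν)
        = (∫⁻ a, ∫⁻ w, f (Fin.cons a w) ∂(Measure.pi fun _ => ν) ∂ν)
            * ∫⁻ a, ∫⁻ w, g (Fin.cons a w) ∂(Measure.pi fun _ => ν) ∂ν := by
          rw [hcons f hf, hcons g hg]
      _ ≤ ∫⁻ a, (∫⁻ w, f (Fin.cons a w) ∂(Measure.pi fun _ => ν))
            * ∫⁻ w, g (Fin.cons a w) ∂(Measure.pi fun _ => ν) ∂ν :=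
          lintegral_mul_lintegral_le_lintegral_mul_of_antitone ν
            (hmeas f hf).lintegral_prod_right' (hmeas g hg).lintegral_prod_right'
            (fun a b hab => lintegral_mono fun w =>
              hanti f hf' (show (a, w) ≤ (b, w) from ⟨hab, le_rfl⟩))
            (fun a b hab => lintegral_mono fun w =>
              hanti g hg' (show (a, w) ≤ (b, w) from ⟨hab, le_rfl⟩))
      _ ≤ ∫⁻ a, ∫⁻ w, f (Fin.cons a w) * g (Fin.cons a w) ∂(Measure.pi fun _ => ν) ∂ν :=
          lintegral_mono fun a => lintegral_mul_lintegral_le_lintegral_mul_pi_of_antitone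
            ((hmeas f hf).comp measurable_prodMk_left) ((hmeas g hg).comp measurable_prodMk_left)
            (fun w w' hw => hanti f hf' (show (a, w) ≤ (a, w') from ⟨le_rfl, hw⟩))
            (fun w w' hw => hanti g hg' (show (a, w) ≤ (a, w') from ⟨le_rfl, hw⟩))
      _ = ∫⁻ x, f x * g x ∂(Measure.pi fun _ => ν) := (hcons _ (hf.mul hg)).symm

theorem measure_mul_measure_le_measure_inter_of_isLowerSet {n : ℕ} {s t : Set (Fin n → α)}
    (hs : MeasurableSet s) (ht : MeasurableSet t) (hs' : IsLowerSet s) (ht' : IsLowerSet t) :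
    Measure.pi (fun _ => ν) s * Measure.pi (fun _ => ν) t ≤ Measure.pi (fun _ => ν) (s ∩ t) := by
  have hanti : ∀ u : Set (Fin n → α), IsLowerSet u → Antitone (u.indicator 1 : _ → ℝ≥0∞) :=
    fun u hu x y hxy => by
      by_cases hy : y ∈ u
      · simp [hy, hu hxy hy]
      · simp [hy]
  have h := lintegral_mul_lintegral_le_lintegral_mul_pi_of_antitone ν
    (measurable_one.indicator hs) (measurable_one.indicator ht) (hanti s hs') (hanti t ht')
  rw [lintegral_indicator_one hs, lintegral_indicator_one ht] at h
  rw [← lintegral_indicator_one (hs.inter ht), Set.inter_indicator_one]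
  exact h

end Harris

theorem measure_mul_lintegral_lt_le_inv {β : Type*} [MeasurableSpace β] {ν : Measure β}
    {f : β → ℝ≥0∞} (hf : AEMeasurable f ν) (hfin : ∫⁻ x, f x ∂ν ≠ ∞) (c : ℝ≥0∞) :
    ν {x | c * ∫⁻ x, f x ∂ν < f x} ≤ c⁻¹ := by
  rcases eq_or_ne (∫⁻ x, f x ∂ν) 0 with hzero | hpos
  · have hnull : ν {x | f x ≠ 0} = 0 := ae_iff.1 ((lintegral_eq_zero_iff' hf).1 hzero)
    refine (measure_mono_null (fun x hx => ?_) hnull).trans_le zero_le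
    simp only [hzero, mul_zero, Set.mem_ofPred_eq] at hx
    exact hx.ne'
  · have hmarkov := mul_meas_ge_le_lintegral₀ hf (c * ∫⁻ x, f x ∂ν)
    rw [ENNReal.le_inv_iff_mul_le, ← ENNReal.mul_le_mul_iff_right hpos hfin, mul_one]
    calc (∫⁻ x, f x ∂ν) * (ν {x | c * ∫⁻ x, f x ∂ν < f x} * c)
        = c * (∫⁻ x, f x ∂ν) * ν {x | c * ∫⁻ x, f x ∂ν < f x} := by ring
      _ ≤ c * (∫⁻ x, f x ∂ν) * ν {x | c * ∫⁻ x, f x ∂ν ≤ f x} := by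
          gcongr
          exact fun h => h.le
      _ ≤ ∫⁻ x, f x ∂ν := hmarkov

theorem measure_preimage_le_mul_measure_preimage_inter_of_indepFun {Ω β γ : Type*}
    [MeasurableSpace Ω] [MeasurableSpace β] [MeasurableSpace γ] {P : Measure Ω}
    [IsProbabilityMeasure P] {V : Ω → β} {η : Ω → γ} (hV : Measurable V) (hη : Measurable η)
    (hind : IndepFun V η P) {C : Set (β × γ)} {G : Set γ} (hC : MeasurableSet C)
    (hG : MeasurableSet G) {c : ℝ≥0∞}
    (hsec : ∀ v, P.map η (Prod.mk v ⁻¹' C) ≤ c * P.map η (Prod.mk v ⁻¹' C ∩ G)) :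
    P ((fun ω => (V ω, η ω)) ⁻¹' C) ≤ c * P ((fun ω => (V ω, η ω)) ⁻¹' C ∩ η ⁻¹' G) := by
  have hCG : MeasurableSet (C ∩ Set.univ ×ˢ G) := hC.inter (MeasurableSet.univ.prod hG)
  have hpre : (fun ω => (V ω, η ω)) ⁻¹' C ∩ η ⁻¹' G
      = (fun ω => (V ω, η ω)) ⁻¹' (C ∩ Set.univ ×ˢ G) := by
    ext ω
    simp
  rw [hpre, ← Measure.map_apply (hV.prodMk hη) hC, ← Measure.map_apply (hV.prodMk hη) hCG,
    (indepFun_iff_map_prod_eq_prod_map_map hV.aemeasurable hη.aemeasurable).1 hind,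
    Measure.prod_apply hC, Measure.prod_apply hCG,
    ← lintegral_const_mul c (measurable_measure_prodMk_left hCG)]
  refine lintegral_mono fun v => (hsec v).trans_eq ?_
  congr 2
  ext h
  simp

theorem Finset.sum_Icc_one_eq_sum_filter_fin_lt {M : Type*} [AddCommMonoid M] {j k : ℕ}
    (hk : k ≤ j) (x : ℕ → M) :
    ∑ i ∈ Finset.Icc 1 k, x i
      = ∑ i ∈ Finset.univ.filter (fun i : Fin j => (i : ℕ) < k), x (i + 1) := by
  have hrange : (Finset.range j).filter (· < k) = Finset.range k := by
    ext i
    simp only [Finset.mem_filter, Finset.mem_range]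
    omega
  rw [Finset.sum_filter, Fin.sum_univ_eq_sum_range (fun i => if i < k then x (i + 1) else 0),
    ← Finset.sum_filter, hrange, Finset.range_eq_Ico, Finset.sum_Ico_add', zero_add,
    Finset.Ico_add_one_right_eq_Icc]

/-- Pairs `(a, x)` of `j`-step sequences along which `max_{1 ≤ k ≤ j} Σ_{i<k} (a_i - x_i) ≤ y`. -/
def boundedWalkSet (j : ℕ) (y : ℝ) : Set ((Fin j → ℝ) × (Fin j → ℝ)) :=
  {p | ∀ k ∈ Finset.Icc 1 j, ∑ i ∈ Finset.univ.filter (fun i : Fin j => (i : ℕ) < k), p.1 i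
    - ∑ i ∈ Finset.univ.filter (fun i : Fin j => (i : ℕ) < k), p.2 i ≤ y}

theorem measurableSet_boundedWalkSet (j : ℕ) (y : ℝ) : MeasurableSet (boundedWalkSet j y) := by
  simp only [boundedWalkSet, Set.ofPred_forall]
  exact MeasurableSet.iInter fun k => MeasurableSet.iInter fun _ =>
    measurableSet_le (by fun_prop) measurable_const

instance (Q : QueueParams) : IsProbabilityMeasure Q.μ := Q.μ_prob

namespace QueueParams

variable (Q : QueueParams) (j : ℕ) (y : ℝ)

abbrev noiseLaw : Measure (Fin j → ℝ) := Measure.pi fun _ => Q.μ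

/-- `q_{j,y}(x_1, …, x_j)` as an `ℝ≥0∞`-valued function of `x : Fin j → ℝ`, with `x i = x_{i+1}`. -/
def condWalkMeasure (x : Fin j → ℝ) : ℝ≥0∞ :=
  Q.noiseLaw j ((fun a => (a, x)) ⁻¹' boundedWalkSet j y)

theorem condWalkProb_eq (x : ℕ → ℝ) :
    Q.condWalkProb j y x = (Q.condWalkMeasure j y fun i => x (i + 1)).toReal := by
  unfold condWalkProb condWalkMeasure
  congr 2
  ext a
  refine forall₂_congr fun k hk => ?_
  rw [Finset.sum_Icc_one_eq_sum_filter_fin_lt (Finset.mem_Icc.1 hk).2]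

theorem symWalkProb_eq :
    Q.symWalkProb j y = ((Q.noiseLaw j).prod (Q.noiseLaw j) (boundedWalkSet j y)).toReal := by
  rw [← (measurePreserving_arrowProdEquivProdArrow ℝ ℝ (Fin j) (fun _ => Q.μ)
    (fun _ => Q.μ)).measure_preimage (measurableSet_boundedWalkSet j y).nullMeasurableSet]
  unfold symWalkProb
  congr 2
  ext v
  exact forall₂_congr fun k _ => by rw [Finset.sum_sub_distrib]; rfl

theorem lintegral_condWalkMeasure :
    ∫⁻ x, Q.condWalkMeasure j y x ∂Q.noiseLaw j
      = (Q.noiseLaw j).prod (Q.noiseLaw j) (boundedWalkSet j y) :=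
  (Measure.prod_apply_symm (measurableSet_boundedWalkSet j y)).symm

theorem measurable_condWalkMeasure : Measurable (Q.condWalkMeasure j y) :=
  measurable_measure_prodMk_right (measurableSet_boundedWalkSet j y)

theorem monotone_condWalkMeasure : Monotone (Q.condWalkMeasure j y) := by
  intro x x' hx
  refine measure_mono fun a ha k hk => (ha k hk).trans' ?_
  gcongr with i
  exact hx i

def goodSet : Set (Fin j → ℝ) :=
  {x | (Q.condWalkMeasure j y x).toReal ≤ 2 * Q.symWalkProb j y}

theorem measurableSet_goodSet : MeasurableSet (Q.goodSet j y) :=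
  measurableSet_le (Q.measurable_condWalkMeasure j y).ennreal_toReal measurable_const

theorem isLowerSet_goodSet : IsLowerSet (Q.goodSet j y) := fun _ _ hx hgood =>
  (ENNReal.toReal_mono (measure_ne_top _ _) (Q.monotone_condWalkMeasure j y hx)).trans hgood

theorem noiseLaw_compl_goodSet_le : Q.noiseLaw j (Q.goodSet j y)ᶜ ≤ 2⁻¹ := by
  have hfin : ∫⁻ x, Q.condWalkMeasure j y x ∂Q.noiseLaw j ≠ ∞ := by
    rw [lintegral_condWalkMeasure]
    exact measure_ne_top _ _
  refine (measure_mono fun x hx => ?_).trans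
    (measure_mul_lintegral_lt_le_inv (Q.measurable_condWalkMeasure j y).aemeasurable hfin 2)
  simp only [goodSet, Set.mem_compl_iff, Set.mem_ofPred_eq, not_le, symWalkProb_eq] at hx
  rw [Set.mem_ofPred_eq, lintegral_condWalkMeasure]
  refine (ENNReal.toReal_lt_toReal (by finiteness)
    (measure_ne_top _ _ : Q.condWalkMeasure j y x ≠ ∞)).1 ?_
  rwa [ENNReal.toReal_mul, ENNReal.toReal_ofNat]

theorem noiseLaw_le_two_mul_inter_goodSet {D : Set (Fin j → ℝ)} (hD : MeasurableSet D)
    (hD' : IsLowerSet D) : Q.noiseLaw j D ≤ 2 * Q.noiseLaw j (D ∩ Q.goodSet j y) := by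
  have hgood := Q.measurableSet_goodSet j y
  have hhalf : 2⁻¹ ≤ Q.noiseLaw j (Q.goodSet j y) :=
    calc 2⁻¹ = 1 - 2⁻¹ := ENNReal.one_sub_inv_two.symm
      _ ≤ 1 - Q.noiseLaw j (Q.goodSet j y)ᶜ :=
          tsub_le_tsub_left (Q.noiseLaw_compl_goodSet_le j y) 1
      _ = Q.noiseLaw j (Q.goodSet j y) := by rw [← prob_compl_eq_one_sub hgood.compl, compl_compl]
  calc Q.noiseLaw j D = 2 * (Q.noiseLaw j D * 2⁻¹) := by
        rw [← div_eq_mul_inv, ENNReal.mul_div_cancel two_ne_zero ENNReal.ofNat_ne_top]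
    _ ≤ 2 * (Q.noiseLaw j D * Q.noiseLaw j (Q.goodSet j y)) := by gcongr
    _ ≤ 2 * Q.noiseLaw j (D ∩ Q.goodSet j y) := by
        gcongr
        exact measure_mul_measure_le_measure_inter_of_isLowerSet Q.μ hD hgood hD'
          (Q.isLowerSet_goodSet j y)

/-- Triples `((x, a), h)` for which the wave driven by the increments `Fin.append a h` into the
configuration `x` moves at least the first `n + j` customers. -/
def longWaveSet (n j : ℕ) : Set (((ℕ → ℝ) × (Fin n → ℝ)) × (Fin j → ℝ)) :=
  {p | ∀ k ∈ Finset.Icc 1 (n + j),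
    ∑ i ∈ Finset.univ.filter (fun i : Fin (n + j) => (i : ℕ) < k), Fin.append p.1.2 p.2 i
      < p.1.1 (k + 1) - Q.cp}

theorem measurableSet_longWaveSet (n j : ℕ) : MeasurableSet (Q.longWaveSet n j) := by
  have happ : Measurable fun p : ((ℕ → ℝ) × (Fin n → ℝ)) × (Fin j → ℝ) => Fin.append p.1.2 p.2 :=
    measurable_pi_lambda _ fun i => by
      refine Fin.addCases (fun a => ?_) (fun b => ?_) i
      · simp only [Fin.append_left]
        fun_prop
      · simp only [Fin.append_right]
        fun_prop
  simp only [longWaveSet, Set.ofPred_forall]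
  exact .iInter fun k => .iInter fun _ => measurableSet_lt
    (Finset.measurable_sum _ fun i _ => (measurable_pi_apply i).comp happ) (by fun_prop)

theorem isLowerSet_preimage_longWaveSet {n j : ℕ} (v : (ℕ → ℝ) × (Fin n → ℝ)) :
    IsLowerSet (Prod.mk v ⁻¹' Q.longWaveSet n j) := by
  intro h' h hh hmem k hk
  refine lt_of_le_of_lt (Finset.sum_le_sum fun i _ => ?_) (hmem k hk)
  refine Fin.addCases (fun a => ?_) (fun b => ?_) i
  · simp only [Fin.append_left, le_refl]
  · simpa only [Fin.append_right] using hh b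

end QueueParams

namespace QueueProcess

variable {Q : QueueParams} {Ω : Type} [MeasurableSpace Ω] (qp : QueueProcess Q Ω)

instance : IsProbabilityMeasure qp.P := qp.P_prob

/-- The σ-algebra of the noise variables `ξ_{m+1}(u+1)`, `(m, u) ∈ S`
(the indexing of `ξ_indep`). -/
def noiseSigma (S : Set (ℕ × ℕ)) : MeasurableSpace Ω :=
  ⨆ p ∈ S, MeasurableSpace.comap (qp.ξ (p.1 + 1) (p.2 + 1)) inferInstance

theorem measurable_ξ_noiseSigma {S : Set (ℕ × ℕ)} {m u : ℕ} (h : (m, u) ∈ S) :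
    Measurable[qp.noiseSigma S] (qp.ξ (m + 1) (u + 1)) :=
  (comap_measurable _).mono (le_biSup (fun p => MeasurableSpace.comap
    (qp.ξ (p.1 + 1) (p.2 + 1)) inferInstance) h) le_rfl

theorem noiseSigma_mono {S T : Set (ℕ × ℕ)} (h : S ⊆ T) : qp.noiseSigma S ≤ qp.noiseSigma T :=
  biSup_mono h

theorem noiseSigma_le (S : Set (ℕ × ℕ)) : qp.noiseSigma S ≤ ‹MeasurableSpace Ω› :=
  iSup₂_le fun p _ => (qp.ξ_meas _ _ (by omega) (by omega)).comap_le

theorem indep_noiseSigma {S T : Set (ℕ × ℕ)} (h : Disjoint S T) :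
    Indep (qp.noiseSigma S) (qp.noiseSigma T) qp.P :=
  indep_iSup_of_disjoint (fun p => (qp.ξ_meas _ _ (by omega) (by omega)).comap_le)
    qp.ξ_indep.iIndep h

theorem X_succ_eq_ite (u : ℕ) {i : ℕ} (hi : 1 ≤ i) (ω : Ω) :
    qp.X i (u + 1) ω = if ∀ k ∈ Finset.Icc 1 i,
        ∑ m ∈ Finset.Icc 1 k, qp.ξ m (u + 1) ω < qp.X (k + 1) u ω - Q.cp
      then ∑ m ∈ Finset.Icc 1 i, qp.ξ m (u + 1) ω else qp.X (i + 1) u ω := by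
  split_ifs with h
  · exact qp.X_move (u + 1) ω i (by omega) hi h
  · exact qp.X_stay (u + 1) ω i (by omega) hi h

theorem measurable_X_noiseSigma : ∀ t i, Measurable[qp.noiseSigma {p | p.2 < t}] (qp.X i t)
  | 0, i => by
    rw [show qp.X i 0 = fun _ => qp.x0 i from funext (qp.X_init i)]
    exact measurable_const
  | u + 1, 0 => by
    rw [show qp.X 0 (u + 1) = fun _ => 0 from funext (qp.X_zero (u + 1))]
    exact measurable_const
  | u + 1, i + 1 => by
    have hX : ∀ k, Measurable[qp.noiseSigma {p | p.2 < u + 1}] (qp.X k u) := fun k =>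
      (measurable_X_noiseSigma u k).mono (qp.noiseSigma_mono fun p (hp : p.2 < u) => by
        simp only [Set.mem_ofPred_eq]; omega) le_rfl
    have hsum : ∀ k, Measurable[qp.noiseSigma {p | p.2 < u + 1}]
        fun ω => ∑ m ∈ Finset.Icc 1 k, qp.ξ m (u + 1) ω := fun k =>
      Finset.measurable_sum _ fun m hm => by
        obtain ⟨m, rfl⟩ := Nat.exists_eq_add_of_le' (Finset.mem_Icc.1 hm).1
        exact qp.measurable_ξ_noiseSigma (by simp)
    rw [funext (qp.X_succ_eq_ite u (Nat.le_add_left 1 i))]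
    refine Measurable.ite ?_ (hsum _) (hX _)
    simp only [Set.ofPred_forall]
    exact .iInter fun k => .iInter fun _ => measurableSet_lt (hsum k) ((hX _).sub_const _)

theorem natCast_lt_W_iff (t m : ℕ) (ω : Ω) :
    (m : ℕ∞) < qp.W t ω ↔ ∀ k ∈ Finset.Icc 1 m,
      ∑ i ∈ Finset.Icc 1 k, qp.ξ i t ω < qp.X (k + 1) (t - 1) ω - Q.cp := by
  rw [← ENat.add_one_le_iff (ENat.natCast_ne_top m), W, le_iInf₂_iff]
  refine ⟨fun h k hk => ?_, fun h n hn => ?_⟩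
  · by_contra hge
    have := h k ⟨(Finset.mem_Icc.1 hk).1, not_lt.1 hge⟩
    norm_cast at this
    have := (Finset.mem_Icc.1 hk).2
    omega
  · by_contra hlt
    have hnm : n ≤ m := by
      norm_cast at hlt
      omega
    exact not_lt.2 hn.2 (h n (Finset.mem_Icc.2 ⟨hn.1, hnm⟩))

def pastState (n u : ℕ) (ω : Ω) : (ℕ → ℝ) × (Fin n → ℝ) :=
  (fun k => qp.X k u ω, fun i => qp.ξ (i + 1) (u + 1) ω)

def freshNoise (n j u : ℕ) (ω : Ω) : Fin j → ℝ := fun i => qp.ξ (n + i + 1) (u + 1) ω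

def freshIndices (n u : ℕ) : Set (ℕ × ℕ) := {p | p.2 = u ∧ n ≤ p.1}

theorem measurable_pastState (n u : ℕ) :
    Measurable[qp.noiseSigma (freshIndices n u)ᶜ] (qp.pastState n u) := by
  refine Measurable.prodMk (@measurable_pi_lambda _ _ _ (qp.noiseSigma _) _ _ fun k => ?_)
    (@measurable_pi_lambda _ _ _ (qp.noiseSigma _) _ _ fun i => qp.measurable_ξ_noiseSigma ?_)
  · exact (qp.measurable_X_noiseSigma u k).mono
      (qp.noiseSigma_mono fun p (hp : p.2 < u) ⟨hu, _⟩ => by omega) le_rfl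
  · exact fun ⟨_, hi⟩ => by omega

theorem measurable_freshNoise (n j u : ℕ) :
    Measurable[qp.noiseSigma (freshIndices n u)] (qp.freshNoise n j u) :=
  @measurable_pi_lambda _ _ _ (qp.noiseSigma _) _ _ fun i =>
    qp.measurable_ξ_noiseSigma ⟨rfl, Nat.le_add_right n i⟩

theorem indepFun_pastState_freshNoise (n j u : ℕ) :
    IndepFun (qp.pastState n u) (qp.freshNoise n j u) qp.P :=
  indep_of_indep_of_le_right
    (indep_of_indep_of_le_left (qp.indep_noiseSigma disjoint_compl_left)
      (qp.measurable_pastState n u).comap_le)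
    (qp.measurable_freshNoise n j u).comap_le

theorem map_freshNoise (n j u : ℕ) : qp.P.map (qp.freshNoise n j u) = Q.noiseLaw j := by
  have hinj : Function.Injective fun i : Fin j => (n + (i : ℕ), u) := fun a b h => by
    simpa [Fin.ext_iff] using h
  have hmeas : ∀ i : Fin j, Measurable (qp.ξ (n + i + 1) (u + 1)) := fun i =>
    qp.ξ_meas _ _ (by omega) (by omega)
  refine ((iIndepFun_iff_map_fun_eq_pi_map fun i => (hmeas i).aemeasurable).1
    (qp.ξ_indep.precomp hinj)).trans ?_
  exact congrArg Measure.pi (funext fun i => qp.ξ_law _ _ (by omega) (by omega))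

theorem waveC_succ_eq_preimage (s j u : ℕ) :
    qp.waveC s j (u + 1) = (fun ω => (qp.pastState (s - (u + 1)) u ω,
      qp.freshNoise (s - (u + 1)) j u ω)) ⁻¹' Q.longWaveSet (s - (u + 1)) j := by
  ext ω
  have happ : Fin.append (qp.pastState (s - (u + 1)) u ω).2 (qp.freshNoise (s - (u + 1)) j u ω)
      = fun i : Fin (s - (u + 1) + j) => qp.ξ (i + 1) (u + 1) ω :=
    Fin.append_castAdd_natAdd (f := fun i : Fin (s - (u + 1) + j) => qp.ξ (i + 1) (u + 1) ω)
  rw [waveC, Set.mem_ofPred_eq, qp.natCast_lt_W_iff]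
  refine forall₂_congr fun k hk => ?_
  rw [Finset.sum_Icc_one_eq_sum_filter_fin_lt (Finset.mem_Icc.1 hk).2, happ]
  rfl

theorem waveB_succ_eq (s j u : ℕ) (y : ℝ) :
    qp.waveB s j y (u + 1)
      = qp.waveC s j (u + 1) ∩ qp.freshNoise (s - (u + 1)) j u ⁻¹' Q.goodSet j y := by
  ext ω
  simp only [waveB, Set.mem_inter_iff, Set.mem_ofPred_eq, Set.mem_preimage, QueueParams.IsGood,
    QueueParams.condWalkProb_eq]
  rfl

theorem measure_waveC_le_two_mul_measure_waveB (s j u : ℕ) (y : ℝ) :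
    qp.P (qp.waveC s j (u + 1)) ≤ 2 * qp.P (qp.waveB s j y (u + 1)) := by
  rw [qp.waveB_succ_eq, qp.waveC_succ_eq_preimage]
  refine measure_preimage_le_mul_measure_preimage_inter_of_indepFun
    ((qp.measurable_pastState _ u).mono (qp.noiseSigma_le _) le_rfl)
    ((qp.measurable_freshNoise _ j u).mono (qp.noiseSigma_le _) le_rfl)
    (qp.indepFun_pastState_freshNoise _ j u) (Q.measurableSet_longWaveSet _ j)
    (Q.measurableSet_goodSet j y) fun v => ?_
  rw [qp.map_freshNoise]
  exact Q.noiseLaw_le_two_mul_inter_goodSet j y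
    (measurable_prodMk_left (Q.measurableSet_longWaveSet _ j)) (Q.isLowerSet_preimage_longWaveSet v)

end QueueProcess

theorem long_waves_le_twice_good_waves_general (Q : QueueParams) {Ω : Type} [MeasurableSpace Ω]
    (qp : QueueProcess Q Ω) (j s : ℕ) (y : ℝ) :
    ∑ t ∈ Finset.Icc 1 (j / 2), (qp.P (qp.waveC s j t)).toReal
      ≤ 2 * ∑ t ∈ Finset.Icc 1 (j / 2), (qp.P (qp.waveB s j y t)).toReal := by
  rw [Finset.mul_sum]
  refine Finset.sum_le_sum fun t ht => ?_
  obtain ⟨u, rfl⟩ := Nat.exists_eq_add_of_le' (Finset.mem_Icc.1 ht).1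
  rw [← ENNReal.toReal_ofNat 2, ← ENNReal.toReal_mul]
  exact ENNReal.toReal_mono (by finiteness) (qp.measure_waveC_le_two_mul_measure_waveB s j u y)

theorem long_waves_le_twice_good_waves (Q : QueueParams) {Ω : Type} [MeasurableSpace Ω]
    (qp : QueueProcess Q Ω) (j s : ℕ) (hj4 : 4 ≤ j) (hjeven : Even j) (hsj : j < s)
    (y : ℝ) (hy : 0 < y) :
    ∑ t ∈ Finset.Icc 1 (j / 2), (qp.P (qp.waveC s j t)).toReal
      ≤ 2 * ∑ t ∈ Finset.Icc 1 (j / 2), (qp.P (qp.waveB s j y t)).toReal :=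
  long_waves_le_twice_good_waves_general Q qp j s y
end
end
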